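/- arXiv:2508.00866 — 2 statements merged into one kernel-verified Lean document; each statement's English description precedes it below -/
import Mathlib

section
/- Let q ∈ L¹(0,π) be real-valued and let f be a rational Herglotz–Nevanlinna function. Let λ₁ < λ₂ be real numbers such that the closed interval [λ₁,λ₂] contains no pole of f and φ(π,λ) ≠ 0 for every λ ∈ [λ₁,λ₂]. Then φ′(π,λ₂)/φ(π,λ₂) < φ′(π,λ₁)/φ(π,λ₁); that is, the function λ ↦ φ′(π,λ)/φ(π,λ) is strictly decreasing on every interval free of poles of f and of zeros of φ(π,·). -/
open MeasureTheory Set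

noncomputable section

/-- A rational Herglotz–Nevanlinna function, given by its canonical data:
`f(λ) = a·λ + c + Σ_j γ_j / (β_j − λ)` with `a ≥ 0`, `γ_j > 0` and `β_1 < … < β_n`. -/
structure RatHN where
  a : ℝ
  c : ℝ
  n : ℕ
  γ : Fin n → ℝ
  β : Fin n → ℝ
  ha : 0 ≤ a
  hγ : ∀ j, 0 < γ j
  hβ : StrictMono β

namespace RatHN

/-- The value `f(λ)` of a rational Herglotz–Nevanlinna function. -/
def eval (f : RatHN) (lam : ℝ) : ℝ :=
  f.a * lam + f.c + ∑ j : Fin f.n, f.γ j / (f.β j - lam)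

/-- `lam` is a pole of `f`. -/
def IsPole (f : RatHN) (lam : ℝ) : Prop := ∃ j, f.β j = lam

end RatHN

/-- A (Carathéodory) solution of `−y″ + Q·y = λ·y` on `[0, L]`:
a pair of continuous functions `y, y'` satisfying the two integral equations. -/
def IsCaraSol (Q : ℝ → ℝ) (L lam : ℝ) (y y' : ℝ → ℝ) : Prop :=
  ContinuousOn y (Icc 0 L) ∧ ContinuousOn y' (Icc 0 L) ∧
  (∀ x ∈ Icc (0:ℝ) L, y x = y 0 + ∫ t in (0:ℝ)..x, y' t) ∧
  (∀ x ∈ Icc (0:ℝ) L, y' x = y' 0 + ∫ t in (0:ℝ)..x, (Q t - lam) * y t)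

/-- `lam` is an eigenvalue of the problem `P(q, f, b)`, where `b : Option ℝ`
and `none` stands for the Dirichlet condition (`b = ∞`) at the right endpoint. -/
def IsEigen (q : ℝ → ℝ) (f : RatHN) (b : Option ℝ) (lam : ℝ) : Prop :=
  ∃ y y' : ℝ → ℝ, IsCaraSol q Real.pi lam y y' ∧
    (∃ x ∈ Icc (0:ℝ) Real.pi, y x ≠ 0) ∧
    (¬ f.IsPole lam → y' 0 = -f.eval lam * y 0) ∧
    (f.IsPole lam → y 0 = 0) ∧
    (∀ bb : ℝ, b = some bb → y' Real.pi = bb * y Real.pi) ∧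
    (b = none → y Real.pi = 0)

/-- The set of eigenvalues of the problem `P(q, f, b)`. -/
def eigenvalues (q : ℝ → ℝ) (f : RatHN) (b : Option ℝ) : Set ℝ :=
  {lam | IsEigen q f b lam}

/-- `Λ` is an enumeration of the set `S`: a strictly increasing sequence whose
range is exactly `S`. -/
def IsEnum (S : Set ℝ) (Λ : ℕ → ℝ) : Prop :=
  StrictMono Λ ∧ Set.range Λ = S


section AuxSL

lemma diag_null (μ : Measure ℝ) [NullSingletonClass μ] [SFinite μ] :
    (μ.prod μ) {z : ℝ × ℝ | z.1 = z.2} = 0 := by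
  have hm : MeasurableSet {z : ℝ × ℝ | z.1 = z.2} :=
    measurableSet_eq_fun measurable_fst measurable_snd
  rw [Measure.prod_apply hm]
  simp only [Set.preimage]
  have : ∀ x : ℝ, μ {y : ℝ | x = y} = 0 := by
    intro x
    have : {y : ℝ | x = y} = {x} := by ext y; simp [eq_comm]
    rw [this]; exact measure_singleton x
  simp [this]

lemma fubini_by_parts {b : ℝ} {F G : ℝ → ℝ}
    (hF : IntegrableOn F (Ioc 0 b)) (hG : IntegrableOn G (Ioc 0 b)) :
    (∫ x in Ioc (0:ℝ) b, F x * ∫ t in Ioc (0:ℝ) x, G t)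
      + (∫ x in Ioc (0:ℝ) b, G x * ∫ t in Ioc (0:ℝ) x, F t)
    = (∫ x in Ioc (0:ℝ) b, F x) * ∫ x in Ioc (0:ℝ) b, G x := by
  set μ := volume.restrict (Ioc (0:ℝ) b) with hμ
  have hprod : Integrable (fun z : ℝ × ℝ => F z.1 * G z.2) (μ.prod μ) :=
    hF.mul_prod hG
  have hSm : MeasurableSet {z : ℝ × ℝ | z.2 ≤ z.1} :=
    measurableSet_le measurable_snd measurable_fst
  have hS'm : MeasurableSet {z : ℝ × ℝ | z.1 ≤ z.2} :=
    measurableSet_le measurable_fst measurable_snd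
  have h1 : Integrable ({z : ℝ × ℝ | z.2 ≤ z.1}.indicator
      (fun z : ℝ × ℝ => F z.1 * G z.2)) (μ.prod μ) := hprod.indicator hSm
  have h2 : Integrable ({z : ℝ × ℝ | z.1 ≤ z.2}.indicator
      (fun z : ℝ × ℝ => F z.1 * G z.2)) (μ.prod μ) := hprod.indicator hS'm
  -- rewrite inner integrals via indicators
  have key : ∀ (F G : ℝ → ℝ), IntegrableOn F (Ioc 0 b) → IntegrableOn G (Ioc 0 b) →
      (∫ x in Ioc (0:ℝ) b, F x * ∫ t in Ioc (0:ℝ) x, G t)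
        = ∫ z : ℝ × ℝ, {z : ℝ × ℝ | z.2 ≤ z.1}.indicator
            (fun z : ℝ × ℝ => F z.1 * G z.2) z ∂(μ.prod μ) := by
    intro F G hF hG
    rw [MeasureTheory.integral_prod _ ((hF.mul_prod hG).indicator hSm)]
    apply setIntegral_congr_fun measurableSet_Ioc
    intro x hx
    have hIoc : Ioc (0:ℝ) x = Ioc 0 b ∩ Iic x := by
      rw [Ioc_inter_Iic, min_eq_right hx.2]
    calc F x * ∫ t in Ioc (0:ℝ) x, G t
        = ∫ t in Ioc (0:ℝ) x, F x * G t := by rw [integral_const_mul]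
      _ = ∫ t in Ioc (0:ℝ) b, (Iic x).indicator (fun t => F x * G t) t := by
          rw [setIntegral_indicator measurableSet_Iic, hIoc]
      _ = ∫ t, {z : ℝ × ℝ | z.2 ≤ z.1}.indicator
            (fun z : ℝ × ℝ => F z.1 * G z.2) (x, t) ∂μ := by
          apply integral_congr_ae
          filter_upwards with t
          by_cases h : t ≤ x <;> simp [Set.indicator, h]
  rw [key F G hF hG, key G F hG hF]
  have swap2 : (∫ z : ℝ × ℝ, {z : ℝ × ℝ | z.2 ≤ z.1}.indicator
      (fun z : ℝ × ℝ => G z.1 * F z.2) z ∂(μ.prod μ))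
      = ∫ z : ℝ × ℝ, {z : ℝ × ℝ | z.1 ≤ z.2}.indicator
          (fun z : ℝ × ℝ => F z.1 * G z.2) z ∂(μ.prod μ) := by
    rw [← MeasureTheory.integral_prod_swap]
    apply integral_congr_ae
    filter_upwards with z
    rcases z with ⟨x, t⟩
    by_cases h : x ≤ t <;> simp [Set.indicator, h, mul_comm]
  rw [swap2, ← integral_add h1 h2]
  have : ∀ z : ℝ × ℝ,
      {z : ℝ × ℝ | z.2 ≤ z.1}.indicator (fun z : ℝ × ℝ => F z.1 * G z.2) z
      + {z : ℝ × ℝ | z.1 ≤ z.2}.indicator (fun z : ℝ × ℝ => F z.1 * G z.2) z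
      = F z.1 * G z.2 + {z : ℝ × ℝ | z.1 = z.2}.indicator
          (fun z : ℝ × ℝ => F z.1 * G z.2) z := by
    intro ⟨x, t⟩
    rcases le_total t x with h | h <;> rcases eq_or_ne x t with he | hne
    · simp [Set.indicator, h, he]
    · have : ¬ (x ≤ t) := by
        intro hc; exact hne (le_antisymm hc h)
      simp [Set.indicator, h, this, hne]
    · simp [Set.indicator, h, he]
    · have : ¬ (t ≤ x) := by
        intro hc; exact hne (le_antisymm h hc)
      simp [Set.indicator, h, this, hne]
  rw [integral_congr_ae (Filter.Eventually.of_forall this), integral_add hprod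
    (hprod.indicator (measurableSet_eq_fun measurable_fst measurable_snd))]
  rw [integral_indicator (measurableSet_eq_fun measurable_fst measurable_snd)]
  rw [Measure.restrict_eq_zero.mpr (diag_null μ)]
  simp [MeasureTheory.integral_prod_mul]

section
variable {b : ℝ} {g : ℝ → ℝ}


lemma primitive_meas (hb : 0 ≤ b) (hg : IntegrableOn g (Ioc 0 b)) {x : ℝ} (hx : x ∈ Icc 0 b) :
    AEStronglyMeasurable (fun t => ∫ s in Ioc (0:ℝ) t, g s) (volume.restrict (Ioc 0 x)) := by
  have h1 : IntegrableOn g (Icc 0 b) := by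
    rw [integrableOn_Icc_iff_integrableOn_Ioc]
    exact hg
  have : AEStronglyMeasurable (fun t => ∫ s in Ioc (0:ℝ) t, g s)
      (volume.restrict (Icc 0 b)) :=
    (intervalIntegral.continuousOn_primitive (f := g) (μ := volume) h1).aestronglyMeasurable
      measurableSet_Icc
  exact this.mono_measure (Measure.restrict_mono (Ioc_subset_Icc_self.trans
    (Icc_subset_Icc le_rfl hx.2)) le_rfl)

lemma primitive_bound (hg : IntegrableOn g (Ioc 0 b)) {t : ℝ} (ht : t ∈ Icc 0 b) :
    |∫ s in Ioc (0:ℝ) t, g s| ≤ ∫ s in Ioc (0:ℝ) b, |g s| := by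
  rw [← Real.norm_eq_abs]
  refine (norm_integral_le_integral_norm _).trans ?_
  simp only [Real.norm_eq_abs]
  apply setIntegral_mono_set (hg.abs)
  · filter_upwards with s using abs_nonneg _
  · exact HasSubset.Subset.eventuallyLE (Ioc_subset_Ioc le_rfl ht.2)

lemma integrable_g_pow (hb : 0 ≤ b) (hg : IntegrableOn g (Ioc 0 b)) (k : ℕ)
    {x : ℝ} (hx : x ∈ Icc 0 b) :
    IntegrableOn (fun t => g t * (∫ s in Ioc (0:ℝ) t, g s) ^ k) (Ioc 0 x) := by
  set C := ∫ s in Ioc (0:ℝ) b, |g s| with hC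
  have hgx : IntegrableOn g (Ioc 0 x) := hg.mono_set (Ioc_subset_Ioc le_rfl hx.2)
  refine Integrable.mono' (g := fun t => |g t| * C ^ k) (hgx.abs.mul_const _)
    ((hgx.aestronglyMeasurable).mul ((primitive_meas hb hg hx).pow _)) ?_
  filter_upwards [ae_restrict_mem measurableSet_Ioc] with t ht
  have htb : t ∈ Icc 0 b := ⟨ht.1.le, ht.2.trans hx.2⟩
  have h0C : (0:ℝ) ≤ C := setIntegral_nonneg measurableSet_Ioc fun s _ => abs_nonneg _
  rw [Real.norm_eq_abs, abs_mul, abs_pow]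
  exact mul_le_mul_of_nonneg_left
    (pow_le_pow_left₀ (abs_nonneg _) (primitive_bound hg htb) k) (abs_nonneg _)

lemma primitive_pow_identity (hb : 0 ≤ b) (hg : IntegrableOn g (Ioc 0 b)) (k : ℕ) :
    ∀ x ∈ Icc (0:ℝ) b,
      ∫ t in Ioc (0:ℝ) x, g t * (∫ s in Ioc (0:ℝ) t, g s) ^ k
        = (∫ s in Ioc (0:ℝ) x, g s) ^ (k + 1) / (k + 1) := by
  induction k with
  | zero =>
    intro x hx
    simp
  | succ k ih =>
    intro x hx
    have hgx : IntegrableOn g (Ioc 0 x) := hg.mono_set (Ioc_subset_Ioc le_rfl hx.2)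
    have hGk : IntegrableOn (fun t => g t * (∫ s in Ioc (0:ℝ) t, g s) ^ k) (Ioc 0 x) :=
      integrable_g_pow hb hg k hx
    have key := fubini_by_parts (b := x) hgx hGk
    -- first term: ∫ g(s) * H_k(s) = ∫ g(s) * G(s)^{k+1}/(k+1)
    have e1 : (∫ s in Ioc (0:ℝ) x, g s *
          ∫ t in Ioc (0:ℝ) s, g t * (∫ u in Ioc (0:ℝ) t, g u) ^ k)
        = (∫ s in Ioc (0:ℝ) x, g s * (∫ u in Ioc (0:ℝ) s, g u) ^ (k+1)) / (k + 1) := by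
      rw [← integral_div]
      apply setIntegral_congr_fun measurableSet_Ioc
      intro s hs
      dsimp only
      rw [ih s ⟨hs.1.le, hs.2.trans hx.2⟩]
      ring
    have e2 : (∫ s in Ioc (0:ℝ) x, (g s * (∫ u in Ioc (0:ℝ) s, g u) ^ k) *
          ∫ t in Ioc (0:ℝ) s, g t)
        = ∫ s in Ioc (0:ℝ) x, g s * (∫ u in Ioc (0:ℝ) s, g u) ^ (k+1) := by
      apply setIntegral_congr_fun measurableSet_Ioc
      intro s hs
      dsimp only
      ring
    rw [e1, e2, ih x hx] at key
    have hk1 : ((k:ℝ) + 1) ≠ 0 := by positivity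
    have hk2 : ((k:ℝ) + 1 + 1) ≠ 0 := by positivity
    set H := ∫ s in Ioc (0:ℝ) x, g s * (∫ u in Ioc (0:ℝ) s, g u) ^ (k+1) with hH
    set G := ∫ s in Ioc (0:ℝ) x, g s with hGdef
    -- key : H / (k+1) + H = G * (G^(k+1)/(k+1))
    push_cast
    rw [eq_div_iff hk2]
    have hpow : G ^ (k + 1 + 1) = G * G ^ (k + 1) := by ring
    rw [hpow]
    field_simp at key
    linarith [key]

section
variable {b : ℝ} {g : ℝ → ℝ}



lemma gronwall {A B : ℝ} {h : ℝ → ℝ} (hb : 0 ≤ b)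
    (hg : IntegrableOn g (Ioc 0 b)) (hg0 : ∀ᵐ t ∂(volume.restrict (Ioc 0 b)), 0 ≤ g t)
    (hh : ContinuousOn h (Icc 0 b)) (hh0 : ∀ t ∈ Icc 0 b, 0 ≤ h t)
    (hA : 0 ≤ A) (hB : ∀ t ∈ Icc 0 b, h t ≤ B)
    (hineq : ∀ x ∈ Icc (0:ℝ) b, h x ≤ A + ∫ t in Ioc (0:ℝ) x, g t * h t) :
    ∀ x ∈ Icc (0:ℝ) b, h x ≤ A * Real.exp (∫ t in Ioc (0:ℝ) b, g t) := by
  set G : ℝ → ℝ := fun x => ∫ t in Ioc (0:ℝ) x, g t with hG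
  have hB0 : 0 ≤ B := le_trans (hh0 0 ⟨le_rfl, hb⟩) (hB 0 ⟨le_rfl, hb⟩)
  have hGnonneg : ∀ x ∈ Icc (0:ℝ) b, 0 ≤ G x := by
    intro x hx
    refine setIntegral_nonneg_ae measurableSet_Ioc ?_
    filter_upwards [(ae_restrict_iff' measurableSet_Ioc).mp hg0] with t h1
    exact fun ht => h1 ⟨ht.1, ht.2.trans hx.2⟩
  have hGmono : ∀ x ∈ Icc (0:ℝ) b, G x ≤ G b := by
    intro x hx
    apply setIntegral_mono_set hg hg0
    exact HasSubset.Subset.eventuallyLE (Ioc_subset_Ioc le_rfl hx.2)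
  -- integrability of g * h
  have hhm : AEStronglyMeasurable h (volume.restrict (Icc 0 b)) :=
    hh.aestronglyMeasurable measurableSet_Icc
  have hgh : ∀ x ∈ Icc (0:ℝ) b, IntegrableOn (fun t => g t * h t) (Ioc 0 x) := by
    intro x hx
    have hgx : IntegrableOn g (Ioc 0 x) := hg.mono_set (Ioc_subset_Ioc le_rfl hx.2)
    refine Integrable.mono' (hgx.abs.mul_const B)
      (hgx.aestronglyMeasurable.mul (hhm.mono_measure
        (Measure.restrict_mono (Ioc_subset_Icc_self.trans (Icc_subset_Icc le_rfl hx.2)) le_rfl)))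
      ?_
    filter_upwards [ae_restrict_mem measurableSet_Ioc] with t ht
    have htb : t ∈ Icc 0 b := ⟨ht.1.le, ht.2.trans hx.2⟩
    rw [Real.norm_eq_abs, abs_mul]
    exact mul_le_mul_of_nonneg_left
      (by rw [abs_of_nonneg (hh0 t htb)]; exact hB t htb) (abs_nonneg _)
      |>.trans_eq rfl
  -- main induction
  have main : ∀ n : ℕ, ∀ x ∈ Icc (0:ℝ) b,
      h x ≤ A * (∑ i ∈ Finset.range n, G x ^ i / i.factorial)
            + B * G x ^ n / n.factorial := by
    intro n
    induction n with
    | zero =>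
      intro x hx
      simpa using hB x hx
    | succ n ih =>
      intro x hx
      have hfun : ∀ t : ℝ, g t * (A * (∑ i ∈ Finset.range n, G t ^ i / i.factorial)
            + B * G t ^ n / n.factorial)
          = (∑ i ∈ Finset.range n, (A / i.factorial) * (g t * G t ^ i))
            + (B / n.factorial) * (g t * G t ^ n) := by
        intro t
        simp only [mul_add, Finset.mul_sum]
        congr 1
        · exact Finset.sum_congr rfl fun i _ => by ring
        · ring
      have hupper : IntegrableOn (fun t =>
          (∑ i ∈ Finset.range n, (A / i.factorial) * (g t * G t ^ i))
            + (B / n.factorial) * (g t * G t ^ n)) (Ioc 0 x) :=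
        (integrable_finset_sum _ fun i _ =>
          ((integrable_g_pow hb hg i hx).const_mul _)).add
          ((integrable_g_pow hb hg n hx).const_mul _)
      have step1 : (∫ t in Ioc (0:ℝ) x, g t * h t)
          ≤ ∫ t in Ioc (0:ℝ) x,
              ((∑ i ∈ Finset.range n, (A / i.factorial) * (g t * G t ^ i))
                + (B / n.factorial) * (g t * G t ^ n)) := by
        apply setIntegral_mono_on_ae (hgh x hx) hupper measurableSet_Ioc
        filter_upwards [(ae_restrict_iff' measurableSet_Ioc).mp hg0] with t hg0t ht
        have htb : t ∈ Icc (0:ℝ) b := ⟨ht.1.le, ht.2.trans hx.2⟩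
        rw [← hfun t]
        exact mul_le_mul_of_nonneg_left (ih t htb) (hg0t ⟨ht.1, ht.2.trans hx.2⟩)
      have hval : (∫ t in Ioc (0:ℝ) x,
              ((∑ i ∈ Finset.range n, (A / i.factorial) * (g t * G t ^ i))
                + (B / n.factorial) * (g t * G t ^ n)))
          = (∑ i ∈ Finset.range n, (A / i.factorial) * (G x ^ (i+1) / (i+1)))
            + (B / n.factorial) * (G x ^ (n+1) / (n+1)) := by
        rw [integral_add (integrable_finset_sum _ fun i _ =>
            ((integrable_g_pow hb hg i hx).const_mul _))
            ((integrable_g_pow hb hg n hx).const_mul _),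
          integral_finset_sum _ fun i _ => ((integrable_g_pow hb hg i hx).const_mul _)]
        congr 1
        · exact Finset.sum_congr rfl fun i _ => by
            rw [integral_const_mul, primitive_pow_identity hb hg i x hx]
            try push_cast
            try ring
        · rw [integral_const_mul, primitive_pow_identity hb hg n x hx]
          try push_cast
          try ring
      refine (hineq x hx).trans ?_
      rw [hval] at step1
      have hterm : ∀ i : ℕ, (A / i.factorial) * (G x ^ (i+1) / (i+1))
          = A * (G x ^ (i+1) / (i+1).factorial) := by
        intro i
        have h1 : (i.factorial : ℝ) ≠ 0 := Nat.cast_ne_zero.mpr i.factorial_ne_zero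
        have h2 : ((i:ℝ) + 1) ≠ 0 := by positivity
        rw [Nat.factorial_succ]
        push_cast
        field_simp
      have hrhs : A * (∑ i ∈ Finset.range (n+1), G x ^ i / i.factorial)
            + B * G x ^ (n+1) / (n+1).factorial
          = A + ((∑ i ∈ Finset.range n, (A / i.factorial) * (G x ^ (i+1) / (i+1)))
            + (B / n.factorial) * (G x ^ (n+1) / (n+1))) := by
        rw [Finset.sum_range_succ' (fun i => G x ^ i / (i.factorial : ℝ)) n]
        simp only [pow_zero, Nat.factorial_zero, Nat.cast_one, mul_add, Finset.mul_sum]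
        have h3 : (B / n.factorial) * (G x ^ (n+1) / (n+1)) = B * G x ^ (n+1) / (n+1).factorial := by
          have h1 : (n.factorial : ℝ) ≠ 0 := Nat.cast_ne_zero.mpr n.factorial_ne_zero
          have h2 : ((n:ℝ) + 1) ≠ 0 := by positivity
          rw [Nat.factorial_succ]
          push_cast
          field_simp
        rw [h3, Finset.sum_congr rfl (fun i _ => (hterm i).symm)]
        ring
      rw [hrhs]
      linarith [step1]
  -- conclude
  intro x hx
  have lim : Filter.Tendsto (fun n : ℕ => A * Real.exp (G b)
      + B * G b ^ n / n.factorial) Filter.atTop (nhds (A * Real.exp (G b))) := by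
    have h2 : Filter.Tendsto (fun n : ℕ => B * G b ^ n / n.factorial) Filter.atTop (nhds 0) := by
      simp_rw [mul_div_assoc]
      simpa using (FloorSemiring.tendsto_pow_div_factorial_atTop (G b)).const_mul B
    simpa using (tendsto_const_nhds (x := A * Real.exp (G b))).add h2
  refine le_of_tendsto_of_tendsto' tendsto_const_nhds lim (fun n => ?_)
  refine (main n x hx).trans ?_
  have hGx0 := hGnonneg x hx
  have hGbx := hGmono x hx
  have hsum : (∑ i ∈ Finset.range n, G x ^ i / i.factorial) ≤ Real.exp (G b) := by
    refine le_trans ?_ (Real.sum_le_exp_of_nonneg (hGnonneg b ⟨hb, le_rfl⟩) n)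
    apply Finset.sum_le_sum
    intro i _
    gcongr
  have hpow : B * G x ^ n / n.factorial ≤ B * G b ^ n / n.factorial := by
    gcongr
  exact add_le_add (mul_le_mul_of_nonneg_left hsum hA) hpow


section
variable {L : ℝ} {F H : ℝ → ℝ} {c d : ℝ}

-- integrability of primitive * integrable function
lemma prim_mul_integrable (hL : 0 ≤ L) (hF : IntegrableOn F (Ioc 0 L))
    (hH : IntegrableOn H (Ioc 0 L)) :
    IntegrableOn (fun x => H x * ∫ t in Ioc (0:ℝ) x, F t) (Ioc 0 L) := by
  have h1 : IntegrableOn F (Icc 0 L) := (integrableOn_Icc_iff_integrableOn_Ioc).mpr hF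
  have hm : AEStronglyMeasurable (fun x => ∫ t in Ioc (0:ℝ) x, F t)
      (volume.restrict (Ioc 0 L)) :=
    ((intervalIntegral.continuousOn_primitive (f := F) (μ := volume) h1).aestronglyMeasurable
      measurableSet_Icc).mono_measure (Measure.restrict_mono Ioc_subset_Icc_self le_rfl)
  refine Integrable.mono' (hH.abs.mul_const (∫ t in Ioc (0:ℝ) L, |F t|))
    (hH.aestronglyMeasurable.mul hm) ?_
  filter_upwards [ae_restrict_mem measurableSet_Ioc] with x hx
  rw [Real.norm_eq_abs, abs_mul]
  refine mul_le_mul_of_nonneg_left ?_ (abs_nonneg _)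
  rw [← Real.norm_eq_abs (∫ t in Ioc (0:ℝ) x, F t)]
  refine (norm_integral_le_integral_norm _).trans ?_
  simp only [Real.norm_eq_abs]
  apply setIntegral_mono_set hF.abs
  · filter_upwards with s using abs_nonneg _
  · exact HasSubset.Subset.eventuallyLE (Ioc_subset_Ioc le_rfl hx.2)

lemma prod_rule (hL : 0 ≤ L) (hF : IntegrableOn F (Ioc 0 L)) (hH : IntegrableOn H (Ioc 0 L)) :
    (∫ x in Ioc (0:ℝ) L, (c + ∫ t in Ioc (0:ℝ) x, F t) * H x)
      + (∫ x in Ioc (0:ℝ) L, F x * (d + ∫ t in Ioc (0:ℝ) x, H t))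
    = (c + ∫ t in Ioc (0:ℝ) L, F t) * (d + ∫ t in Ioc (0:ℝ) L, H t) - c * d := by
  have e1 : (∫ x in Ioc (0:ℝ) L, (c + ∫ t in Ioc (0:ℝ) x, F t) * H x)
      = c * (∫ x in Ioc (0:ℝ) L, H x)
        + ∫ x in Ioc (0:ℝ) L, H x * ∫ t in Ioc (0:ℝ) x, F t := by
    rw [← integral_const_mul, ← integral_add (hH.const_mul c) (prim_mul_integrable hL hF hH)]
    apply setIntegral_congr_fun measurableSet_Ioc
    intro x _
    dsimp only
    ring
  have e2 : (∫ x in Ioc (0:ℝ) L, F x * (d + ∫ t in Ioc (0:ℝ) x, H t))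
      = d * (∫ x in Ioc (0:ℝ) L, F x)
        + ∫ x in Ioc (0:ℝ) L, F x * ∫ t in Ioc (0:ℝ) x, H t := by
    rw [← integral_const_mul, ← integral_add (hF.const_mul d) ?int]
    case int =>
      have := prim_mul_integrable hL hH hF
      exact this
    apply setIntegral_congr_fun measurableSet_Ioc
    intro x _
    dsimp only
    ring
  have e3 : (∫ x in Ioc (0:ℝ) L, H x * ∫ t in Ioc (0:ℝ) x, F t)
      + (∫ x in Ioc (0:ℝ) L, F x * ∫ t in Ioc (0:ℝ) x, H t)
      = (∫ x in Ioc (0:ℝ) L, F x) * ∫ x in Ioc (0:ℝ) L, H x := by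
    have := fubini_by_parts hF hH
    linarith [this]
  rw [e1, e2]
  ring_nf
  nlinarith [e3]

end

section
variable {q : ℝ → ℝ} {L lam mu : ℝ}

lemma coeff_mul_integrable (hL : 0 ≤ L) (hqI : IntegrableOn q (Ioc 0 L))
    {w : ℝ → ℝ} (hw : ContinuousOn w (Icc 0 L)) (lam : ℝ) :
    IntegrableOn (fun t => (q t - lam) * w t) (Ioc 0 L) := by
  obtain ⟨C, hC⟩ := (isCompact_Icc (a := (0:ℝ)) (b := L)).exists_bound_of_continuousOn hw
  have hql : IntegrableOn (fun t => q t - lam) (Ioc 0 L) :=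
    hqI.sub (integrableOn_const measure_Ioc_lt_top.ne)
  have hwm : AEStronglyMeasurable w (volume.restrict (Ioc 0 L)) :=
    (hw.aestronglyMeasurable measurableSet_Icc).mono_measure
      (Measure.restrict_mono Ioc_subset_Icc_self le_rfl)
  refine Integrable.mono' (hql.abs.mul_const C) (hql.aestronglyMeasurable.mul hwm) ?_
  filter_upwards [ae_restrict_mem measurableSet_Ioc] with t ht
  rw [Real.norm_eq_abs, abs_mul]
  exact mul_le_mul_of_nonneg_left
    ((Real.norm_eq_abs (w t) ▸ hC t (Ioc_subset_Icc_self ht))) (abs_nonneg _)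

lemma cara_eq_Ioc {y y' : ℝ → ℝ} (hsol : IsCaraSol q L lam y y') :
    (∀ x ∈ Icc (0:ℝ) L, y x = y 0 + ∫ t in Ioc (0:ℝ) x, y' t) ∧
    (∀ x ∈ Icc (0:ℝ) L, y' x = y' 0 + ∫ t in Ioc (0:ℝ) x, (q t - lam) * y t) := by
  constructor
  · intro x hx
    rw [← intervalIntegral.integral_of_le hx.1]
    exact hsol.2.2.1 x hx
  · intro x hx
    rw [← intervalIntegral.integral_of_le hx.1]
    exact hsol.2.2.2 x hx

lemma green (hL : 0 ≤ L) (hqI : IntegrableOn q (Ioc 0 L))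
    {u u' v v' : ℝ → ℝ}
    (hu : IsCaraSol q L lam u u') (hv : IsCaraSol q L mu v v') :
    u L * v' L - u' L * v L
      = (u 0 * v' 0 - u' 0 * v 0) + (lam - mu) * ∫ t in Ioc (0:ℝ) L, u t * v t := by
  have hLmem : L ∈ Icc (0:ℝ) L := ⟨hL, le_rfl⟩
  have hu' : IntegrableOn u' (Ioc 0 L) :=
    (hu.2.1.integrableOn_Icc).mono_set Ioc_subset_Icc_self
  have hv' : IntegrableOn v' (Ioc 0 L) :=
    (hv.2.1.integrableOn_Icc).mono_set Ioc_subset_Icc_self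
  have hHu : IntegrableOn (fun t => (q t - lam) * u t) (Ioc 0 L) :=
    coeff_mul_integrable hL hqI hu.1 lam
  have hHv : IntegrableOn (fun t => (q t - mu) * v t) (Ioc 0 L) :=
    coeff_mul_integrable hL hqI hv.1 mu
  obtain ⟨huI, huI'⟩ := cara_eq_Ioc hu
  obtain ⟨hvI, hvI'⟩ := cara_eq_Ioc hv
  -- A1
  have A1 := prod_rule (c := u 0) (d := v' 0) hL hu' hHv
  have A1' : (∫ x in Ioc (0:ℝ) L, u x * ((q x - mu) * v x))
      + (∫ x in Ioc (0:ℝ) L, u' x * v' x)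
      = u L * v' L - u 0 * v' 0 := by
    have e1 : (∫ x in Ioc (0:ℝ) L, (u 0 + ∫ t in Ioc (0:ℝ) x, u' t) * ((q x - mu) * v x))
        = ∫ x in Ioc (0:ℝ) L, u x * ((q x - mu) * v x) := by
      apply setIntegral_congr_fun measurableSet_Ioc
      intro x hx
      dsimp only
      rw [← huI x (Ioc_subset_Icc_self hx)]
    have e2 : (∫ x in Ioc (0:ℝ) L, u' x * (v' 0 + ∫ t in Ioc (0:ℝ) x, (q t - mu) * v t))
        = ∫ x in Ioc (0:ℝ) L, u' x * v' x := by
      apply setIntegral_congr_fun measurableSet_Ioc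
      intro x hx
      dsimp only
      rw [← hvI' x (Ioc_subset_Icc_self hx)]
    rw [e1, e2] at A1
    rw [A1, ← huI L hLmem, ← hvI' L hLmem]
    try ring
  have A2 := prod_rule (c := v 0) (d := u' 0) hL hv' hHu
  have A2' : (∫ x in Ioc (0:ℝ) L, v x * ((q x - lam) * u x))
      + (∫ x in Ioc (0:ℝ) L, v' x * u' x)
      = v L * u' L - v 0 * u' 0 := by
    have e1 : (∫ x in Ioc (0:ℝ) L, (v 0 + ∫ t in Ioc (0:ℝ) x, v' t) * ((q x - lam) * u x))
        = ∫ x in Ioc (0:ℝ) L, v x * ((q x - lam) * u x) := by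
      apply setIntegral_congr_fun measurableSet_Ioc
      intro x hx
      dsimp only
      rw [← hvI x (Ioc_subset_Icc_self hx)]
    have e2 : (∫ x in Ioc (0:ℝ) L, v' x * (u' 0 + ∫ t in Ioc (0:ℝ) x, (q t - lam) * u t))
        = ∫ x in Ioc (0:ℝ) L, v' x * u' x := by
      apply setIntegral_congr_fun measurableSet_Ioc
      intro x hx
      dsimp only
      rw [← huI' x (Ioc_subset_Icc_self hx)]
    rw [e1, e2] at A2
    rw [A2, ← hvI L hLmem, ← huI' L hLmem]
    try ring
  have hsym : (∫ x in Ioc (0:ℝ) L, u' x * v' x) = ∫ x in Ioc (0:ℝ) L, v' x * u' x := by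
    apply setIntegral_congr_fun measurableSet_Ioc
    intro x _
    ring
  have hmul1 : IntegrableOn (fun x => u x * ((q x - mu) * v x)) (Ioc 0 L) := by
    have : IntegrableOn (fun t => (q t - mu) * (u t * v t)) (Ioc 0 L) :=
      coeff_mul_integrable hL hqI (hu.1.mul hv.1) mu
    apply this.congr_fun (fun x _ => by ring) measurableSet_Ioc
  have hmul2 : IntegrableOn (fun x => v x * ((q x - lam) * u x)) (Ioc 0 L) := by
    have : IntegrableOn (fun t => (q t - lam) * (u t * v t)) (Ioc 0 L) :=
      coeff_mul_integrable hL hqI (hu.1.mul hv.1) lam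
    apply this.congr_fun (fun x _ => by ring) measurableSet_Ioc
  have hdiff : (∫ x in Ioc (0:ℝ) L, u x * ((q x - mu) * v x))
      - (∫ x in Ioc (0:ℝ) L, v x * ((q x - lam) * u x))
      = (lam - mu) * ∫ t in Ioc (0:ℝ) L, u t * v t := by
    rw [← integral_sub hmul1 hmul2, ← integral_const_mul]
    apply setIntegral_congr_fun measurableSet_Ioc
    intro x _
    ring
  linarith [A1', A2', hsym, hdiff]

end


section
variable {q : ℝ → ℝ} {L lam : ℝ}

lemma integrable_mul_cont {g w : ℝ → ℝ} (hg : IntegrableOn g (Ioc 0 L))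
    (hw : ContinuousOn w (Icc 0 L)) :
    IntegrableOn (fun t => g t * w t) (Ioc 0 L) := by
  obtain ⟨C, hC⟩ := (isCompact_Icc (a := (0:ℝ)) (b := L)).exists_bound_of_continuousOn hw
  have hwm : AEStronglyMeasurable w (volume.restrict (Ioc 0 L)) :=
    (hw.aestronglyMeasurable measurableSet_Icc).mono_measure
      (Measure.restrict_mono Ioc_subset_Icc_self le_rfl)
  refine Integrable.mono' (hg.abs.mul_const C) (hg.aestronglyMeasurable.mul hwm) ?_
  filter_upwards [ae_restrict_mem measurableSet_Ioc] with t ht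
  rw [Real.norm_eq_abs, abs_mul]
  exact mul_le_mul_of_nonneg_left
    ((Real.norm_eq_abs (w t) ▸ hC t (Ioc_subset_Icc_self ht))) (abs_nonneg _)

lemma cara_gronwall (hL : 0 ≤ L) (hqI : IntegrableOn q (Ioc 0 L))
    {y y' r : ℝ → ℝ} (hy : ContinuousOn y (Icc 0 L)) (hy' : ContinuousOn y' (Icc 0 L))
    (hr : IntegrableOn r (Ioc 0 L))
    (h1 : ∀ x ∈ Icc (0:ℝ) L, y x = y 0 + ∫ t in Ioc (0:ℝ) x, y' t)
    (h2 : ∀ x ∈ Icc (0:ℝ) L, y' x = y' 0 + ∫ t in Ioc (0:ℝ) x, ((q t - lam) * y t + r t)) :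
    ∀ x ∈ Icc (0:ℝ) L, |y x| + |y' x|
      ≤ (|y 0| + |y' 0| + ∫ t in Ioc (0:ℝ) L, |r t|)
          * Real.exp (∫ t in Ioc (0:ℝ) L, (1 + |q t - lam|)) := by
  have hql : IntegrableOn (fun t => q t - lam) (Ioc 0 L) :=
    hqI.sub (integrableOn_const measure_Ioc_lt_top.ne)
  have hgI : IntegrableOn (fun t => 1 + |q t - lam|) (Ioc 0 L) :=
    (integrableOn_const measure_Ioc_lt_top.ne).add hql.abs
  have hg0 : ∀ᵐ t ∂(volume.restrict (Ioc 0 L)), 0 ≤ 1 + |q t - lam| := by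
    filter_upwards with t; positivity
  have hhcont : ContinuousOn (fun t => |y t| + |y' t|) (Icc 0 L) := hy.abs.add hy'.abs
  have hh0 : ∀ t ∈ Icc (0:ℝ) L, 0 ≤ |y t| + |y' t| := fun t _ => by positivity
  obtain ⟨B, hB⟩ := (isCompact_Icc (a := (0:ℝ)) (b := L)).exists_bound_of_continuousOn hhcont
  have hA : 0 ≤ |y 0| + |y' 0| + ∫ t in Ioc (0:ℝ) L, |r t| := by
    have : 0 ≤ ∫ t in Ioc (0:ℝ) L, |r t| :=
      setIntegral_nonneg measurableSet_Ioc fun t _ => abs_nonneg _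
    positivity
  have hyabs : IntegrableOn (fun t => |y' t|) (Ioc 0 L) :=
    ((hy'.integrableOn_Icc).mono_set Ioc_subset_Icc_self).abs
  have hrabs : IntegrableOn (fun t => |r t|) (Ioc 0 L) := hr.abs
  have hqy : IntegrableOn (fun t => |q t - lam| * |y t|) (Ioc 0 L) := by
    have habs : IntegrableOn (fun t => |(q t - lam) * y t|) (Ioc 0 L) :=
      (coeff_mul_integrable hL hqI hy lam).abs
    refine habs.congr_fun (fun t _ => ?_) measurableSet_Ioc
    exact abs_mul _ _
  have hghI : IntegrableOn (fun t => (1 + |q t - lam|) * (|y t| + |y' t|)) (Ioc 0 L) :=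
    integrable_mul_cont hgI hhcont
  refine gronwall hL hgI hg0 hhcont hh0 hA (fun t ht => hB t ht |>.trans_eq' (by
      rw [Real.norm_eq_abs]; exact abs_of_nonneg (hh0 t ht))) ?_
  intro x hx
  have hsub : Ioc (0:ℝ) x ⊆ Ioc 0 L := Ioc_subset_Ioc le_rfl hx.2
  have est1 : |y x| ≤ |y 0| + ∫ t in Ioc (0:ℝ) x, |y' t| := by
    rw [h1 x hx]
    refine (abs_add_le _ _).trans (add_le_add_right ?_ _)
    rw [← Real.norm_eq_abs (∫ t in Ioc (0:ℝ) x, y' t)]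
    refine (norm_integral_le_integral_norm _).trans ?_
    simp [Real.norm_eq_abs]
  have est2 : |y' x| ≤ |y' 0| + ∫ t in Ioc (0:ℝ) x, (|q t - lam| * |y t| + |r t|) := by
    rw [h2 x hx]
    refine (abs_add_le _ _).trans (add_le_add_right ?_ _)
    rw [← Real.norm_eq_abs (∫ t in Ioc (0:ℝ) x, ((q t - lam) * y t + r t))]
    refine (norm_integral_le_integral_norm _).trans ?_
    simp only [Real.norm_eq_abs]
    refine setIntegral_mono_on ?_ ?_ measurableSet_Ioc ?_
    · exact ((coeff_mul_integrable hL hqI hy lam).mono_set hsub |>.add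
        (hr.mono_set hsub)).abs
    · exact (hqy.mono_set hsub).add (hrabs.mono_set hsub)
    · intro t _
      refine (abs_add_le _ _).trans ?_
      rw [abs_mul]
  have est3 : (∫ t in Ioc (0:ℝ) x, (|q t - lam| * |y t| + |r t|))
      ≤ (∫ t in Ioc (0:ℝ) x, |q t - lam| * |y t|) + ∫ t in Ioc (0:ℝ) L, |r t| := by
    rw [integral_add (hqy.mono_set hsub) (hrabs.mono_set hsub)]
    refine add_le_add_right ?_ _
    refine setIntegral_mono_set hrabs ?_ (HasSubset.Subset.eventuallyLE hsub)
    filter_upwards with t using abs_nonneg _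
  have est4 : (∫ t in Ioc (0:ℝ) x, |y' t|) + (∫ t in Ioc (0:ℝ) x, |q t - lam| * |y t|)
      ≤ ∫ t in Ioc (0:ℝ) x, (1 + |q t - lam|) * (|y t| + |y' t|) := by
    rw [← integral_add (hyabs.mono_set hsub) (hqy.mono_set hsub)]
    refine setIntegral_mono_on ((hyabs.mono_set hsub).add (hqy.mono_set hsub))
      (hghI.mono_set hsub) measurableSet_Ioc ?_
    intro t _
    have h1 := abs_nonneg (y t)
    have h2 := abs_nonneg (y' t)
    have h3 := abs_nonneg (q t - lam)
    nlinarith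
  linarith [est1, est2, est3, est4]

end

end
end
end AuxSL

theorem logDeriv_strictly_decreasing
    (q : ℝ → ℝ) (hq : IntegrableOn q (Ioo 0 Real.pi))
    (f : RatHN)
    (Φ Φ' : ℝ → ℝ → ℝ)
    (hΦ : ∀ lam : ℝ, ¬ f.IsPole lam →
      IsCaraSol q Real.pi lam (Φ lam) (Φ' lam) ∧
      Φ lam 0 = 1 ∧ Φ' lam 0 = -f.eval lam)
    (lam₁ lam₂ : ℝ) (hlt : lam₁ < lam₂)
    (hfree : ∀ lam ∈ Icc lam₁ lam₂, ¬ f.IsPole lam ∧ Φ lam Real.pi ≠ 0) :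
    Φ' lam₂ Real.pi / Φ lam₂ Real.pi < Φ' lam₁ Real.pi / Φ lam₁ Real.pi := by
  have hπ : (0:ℝ) ≤ Real.pi := Real.pi_pos.le
  set I : Set ℝ := Icc lam₁ lam₂ with hIdef
  have hqI : IntegrableOn q (Ioc 0 Real.pi) := hq.congr_set_ae Ioo_ae_eq_Ioc.symm
  set m : ℝ → ℝ := fun lam => Φ' lam Real.pi / Φ lam Real.pi with hmdef
  have hnp : ∀ lam ∈ I, ¬ f.IsPole lam := fun lam hlam => (hfree lam hlam).1
  have hsol : ∀ lam ∈ I, IsCaraSol q Real.pi lam (Φ lam) (Φ' lam) :=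
    fun lam hlam => (hΦ lam (hnp lam hlam)).1
  have hΦ0 : ∀ lam ∈ I, Φ lam 0 = 1 := fun lam hlam => (hΦ lam (hnp lam hlam)).2.1
  have hΦ'0 : ∀ lam ∈ I, Φ' lam 0 = -f.eval lam := fun lam hlam => (hΦ lam (hnp lam hlam)).2.2
  have hπne : ∀ lam ∈ I, Φ lam Real.pi ≠ 0 := fun lam hlam => (hfree lam hlam).2
  -- continuity of f.eval on I
  have hevalcont : ContinuousOn f.eval I := by
    refine (ContinuousOn.add ?_ ?_)
    · exact ((continuous_const.mul continuous_id).add continuous_const).continuousOn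
    · refine continuousOn_finset_sum _ (fun j _ => ?_)
      refine ContinuousOn.div continuousOn_const (continuousOn_const.sub continuousOn_id) ?_
      intro lam hlam
      exact sub_ne_zero.mpr (fun h => (hnp lam hlam) ⟨j, h⟩)
  -- monotonicity of f.eval on I
  have hfmono : ∀ la ∈ I, ∀ mu ∈ I, la ≤ mu → f.eval la ≤ f.eval mu := by
    intro la hla mu hmu hle
    have hterm : ∀ j, f.γ j / (f.β j - la) ≤ f.γ j / (f.β j - mu) := by
      intro j
      have hβ : f.β j ∉ I := fun hmem => (hfree _ hmem).1 ⟨j, rfl⟩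
      have hγ := f.hγ j
      have hkey : ∀ w z : ℝ, f.β j - w ≠ 0 → f.β j - z ≠ 0 →
          f.γ j / (f.β j - z) - f.γ j / (f.β j - w)
            = f.γ j * (z - w) / ((f.β j - z) * (f.β j - w)) := by
        intro w z hw hz
        field_simp
        ring
      rcases lt_or_ge (f.β j) lam₁ with hb | hb
      · have h1 : f.β j - la < 0 := by rcases hla with ⟨h,_⟩; linarith
        have h2 : f.β j - mu < 0 := by rcases hmu with ⟨h,_⟩; linarith
        have hpos : 0 < (f.β j - mu) * (f.β j - la) := mul_pos_of_neg_of_neg h2 h1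
        have := div_nonneg (mul_nonneg hγ.le (by linarith : (0:ℝ) ≤ mu - la)) hpos.le
        have hk := hkey la mu h1.ne h2.ne
        linarith [hk ▸ this]
      · have hb2 : lam₂ < f.β j := by
          by_contra hcon
          push_neg at hcon
          exact hβ ⟨hb, hcon⟩
        have h1 : 0 < f.β j - la := by rcases hla with ⟨_,h⟩; linarith
        have h2 : 0 < f.β j - mu := by rcases hmu with ⟨_,h⟩; linarith
        have hpos : 0 < (f.β j - mu) * (f.β j - la) := mul_pos h2 h1
        have := div_nonneg (mul_nonneg hγ.le (by linarith : (0:ℝ) ≤ mu - la)) hpos.le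
        have hk := hkey la mu h1.ne' h2.ne'
        linarith [hk ▸ this]
    have hsum := Finset.sum_le_sum (fun j (_ : j ∈ Finset.univ) => hterm j)
    have hlin : f.a * la ≤ f.a * mu := mul_le_mul_of_nonneg_left hle f.ha
    unfold RatHN.eval
    linarith [hsum, hlin]
  -- uniform bounds
  obtain ⟨Cf, hCf⟩ := (isCompact_Icc (a := lam₁) (b := lam₂)).exists_bound_of_continuousOn
    hevalcont
  have hCf0 : 0 ≤ Cf := le_trans (norm_nonneg _) (hCf lam₁ ⟨le_rfl, hlt.le⟩)
  set K : ℝ := max |lam₁| |lam₂| with hKdef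
  set CG : ℝ := ∫ t in Ioc (0:ℝ) Real.pi, (1 + (|q t| + K)) with hCGdef
  have hgbarI : IntegrableOn (fun t => 1 + (|q t| + K)) (Ioc 0 Real.pi) :=
    (integrableOn_const measure_Ioc_lt_top.ne).add
      (hqI.abs.add (integrableOn_const measure_Ioc_lt_top.ne))
  have hGmu : ∀ mu ∈ I, (∫ t in Ioc (0:ℝ) Real.pi, (1 + |q t - mu|)) ≤ CG := by
    intro mu hmu
    have hmuK : |mu| ≤ K := by
      rw [abs_le]
      constructor
      · calc -K ≤ -|lam₁| := neg_le_neg (le_max_left _ _)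
          _ ≤ lam₁ := neg_abs_le _
          _ ≤ mu := hmu.1
      · calc mu ≤ lam₂ := hmu.2
          _ ≤ |lam₂| := le_abs_self _
          _ ≤ K := le_max_right _ _
    have hint : IntegrableOn (fun t => 1 + |q t - mu|) (Ioc 0 Real.pi) :=
      (integrableOn_const measure_Ioc_lt_top.ne).add
        ((hqI.sub (integrableOn_const measure_Ioc_lt_top.ne)).abs)
    refine setIntegral_mono_on hint hgbarI measurableSet_Ioc ?_
    intro t _
    have := abs_sub (q t) mu
    have h2 : |q t - mu| ≤ |q t| + |mu| := abs_sub _ _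
    linarith
  set CM : ℝ := (1 + Cf) * Real.exp CG with hCMdef
  have hCM0 : 0 < CM := by positivity
  -- uniform sup bound on solutions
  have hCM : ∀ mu ∈ I, ∀ x ∈ Icc (0:ℝ) Real.pi, |Φ mu x| + |Φ' mu x| ≤ CM := by
    intro mu hmu x hx
    obtain ⟨hIoc1, hIoc2⟩ := cara_eq_Ioc (hsol mu hmu)
    have h2' : ∀ x ∈ Icc (0:ℝ) Real.pi, Φ' mu x = Φ' mu 0
        + ∫ t in Ioc (0:ℝ) x, ((q t - mu) * Φ mu t + (fun _ => (0:ℝ)) t) := by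
      intro x hx
      simpa using hIoc2 x hx
    have hb := cara_gronwall hπ hqI (hsol mu hmu).1 (hsol mu hmu).2.1
      (integrableOn_const measure_Ioc_lt_top.ne) hIoc1 h2' x hx
    simp only [abs_zero, integral_zero, add_zero] at hb
    refine hb.trans ?_
    have hA : |Φ mu 0| + |Φ' mu 0| ≤ 1 + Cf := by
      rw [hΦ0 mu hmu, hΦ'0 mu hmu]
      simp only [abs_one, abs_neg]
      have := hCf mu hmu
      rw [Real.norm_eq_abs] at this
      linarith
    have hE : Real.exp (∫ t in Ioc (0:ℝ) Real.pi, (1 + |q t - mu|)) ≤ Real.exp CG :=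
      Real.exp_le_exp.mpr (hGmu mu hmu)
    exact mul_le_mul hA hE (Real.exp_nonneg _) (by positivity)
  -- difference bound
  have hdiff : ∀ lam ∈ I, ∀ mu ∈ I, ∀ x ∈ Icc (0:ℝ) Real.pi,
      |Φ mu x - Φ lam x| + |Φ' mu x - Φ' lam x|
        ≤ (|f.eval lam - f.eval mu| + |lam - mu| * (Real.pi * CM)) * Real.exp CG := by
    intro lam hlam mu hmu x hx
    obtain ⟨hu1, hu2⟩ := cara_eq_Ioc (hsol lam hlam)
    obtain ⟨hv1, hv2⟩ := cara_eq_Ioc (hsol mu hmu)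
    have hΦmuI : IntegrableOn (Φ mu) (Ioc 0 Real.pi) :=
      ((hsol mu hmu).1.integrableOn_Icc).mono_set Ioc_subset_Icc_self
    have hrI : IntegrableOn (fun t => (lam - mu) * Φ mu t) (Ioc 0 Real.pi) :=
      hΦmuI.const_mul _
    have h1 : ∀ z ∈ Icc (0:ℝ) Real.pi, Φ mu z - Φ lam z = (Φ mu 0 - Φ lam 0)
        + ∫ t in Ioc (0:ℝ) z, (Φ' mu t - Φ' lam t) := by
      intro z hz
      have hsubz : Ioc (0:ℝ) z ⊆ Ioc 0 Real.pi := Ioc_subset_Ioc le_rfl hz.2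
      rw [integral_sub
        ((((hsol mu hmu).2.1.integrableOn_Icc).mono_set Ioc_subset_Icc_self).mono_set hsubz)
        ((((hsol lam hlam).2.1.integrableOn_Icc).mono_set Ioc_subset_Icc_self).mono_set hsubz)]
      rw [hv1 z hz, hu1 z hz]
      ring
    have h2 : ∀ z ∈ Icc (0:ℝ) Real.pi, Φ' mu z - Φ' lam z = (Φ' mu 0 - Φ' lam 0)
        + ∫ t in Ioc (0:ℝ) z, ((q t - lam) * (Φ mu t - Φ lam t) + (lam - mu) * Φ mu t) := by
      intro z hz
      have hsubz : Ioc (0:ℝ) z ⊆ Ioc 0 Real.pi := Ioc_subset_Ioc le_rfl hz.2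
      have e : (∫ t in Ioc (0:ℝ) z, ((q t - lam) * (Φ mu t - Φ lam t) + (lam - mu) * Φ mu t))
          = (∫ t in Ioc (0:ℝ) z, (q t - mu) * Φ mu t)
            - ∫ t in Ioc (0:ℝ) z, (q t - lam) * Φ lam t := by
        rw [← integral_sub ((coeff_mul_integrable hπ hqI (hsol mu hmu).1 mu).mono_set hsubz)
          ((coeff_mul_integrable hπ hqI (hsol lam hlam).1 lam).mono_set hsubz)]
        apply setIntegral_congr_fun measurableSet_Ioc
        intro t _
        ring
      rw [e, hv2 z hz, hu2 z hz]
      ring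
    have hdd := cara_gronwall hπ hqI ((hsol mu hmu).1.sub (hsol lam hlam).1)
      ((hsol mu hmu).2.1.sub (hsol lam hlam).2.1) hrI h1 h2 x hx
    refine hdd.trans ?_
    have hr0 : (0:ℝ) ≤ ∫ t in Ioc (0:ℝ) Real.pi, |(lam - mu) * Φ mu t| :=
      setIntegral_nonneg measurableSet_Ioc fun t _ => abs_nonneg _
    have hAbound : |Φ mu 0 - Φ lam 0| + |Φ' mu 0 - Φ' lam 0|
        + (∫ t in Ioc (0:ℝ) Real.pi, |(lam - mu) * Φ mu t|)
        ≤ |f.eval lam - f.eval mu| + |lam - mu| * (Real.pi * CM) := by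
      have e0 : Φ mu 0 - Φ lam 0 = 0 := by rw [hΦ0 mu hmu, hΦ0 lam hlam]; ring
      have e0' : Φ' mu 0 - Φ' lam 0 = f.eval lam - f.eval mu := by
        rw [hΦ'0 mu hmu, hΦ'0 lam hlam]; ring
      have hrb : (∫ t in Ioc (0:ℝ) Real.pi, |(lam - mu) * Φ mu t|)
          ≤ |lam - mu| * (Real.pi * CM) := by
        have hint : IntegrableOn (fun t => |(lam - mu) * Φ mu t|) (Ioc 0 Real.pi) := hrI.abs
        have : (∫ t in Ioc (0:ℝ) Real.pi, |(lam - mu) * Φ mu t|)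
            ≤ ∫ _ in Ioc (0:ℝ) Real.pi, |lam - mu| * CM := by
          refine setIntegral_mono_on hint
            (integrableOn_const measure_Ioc_lt_top.ne) measurableSet_Ioc ?_
          intro t ht
          rw [abs_mul]
          refine mul_le_mul_of_nonneg_left ?_ (abs_nonneg _)
          have := hCM mu hmu t (Ioc_subset_Icc_self ht)
          have := abs_nonneg (Φ' mu t)
          linarith
        refine this.trans ?_
        rw [setIntegral_const]
        rw [measureReal_def, Real.volume_Ioc, sub_zero, ENNReal.toReal_ofReal hπ]
        rw [smul_eq_mul]
        ring_nf
        nlinarith [abs_nonneg (lam - mu), hCM0.le, hπ]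
      rw [e0, e0', abs_zero]
      have := abs_nonneg (f.eval lam - f.eval mu)
      linarith
    have hE : Real.exp (∫ t in Ioc (0:ℝ) Real.pi, (1 + |q t - lam|)) ≤ Real.exp CG :=
      Real.exp_le_exp.mpr (hGmu lam hlam)
    have h0 : (0:ℝ) ≤ |Φ mu 0 - Φ lam 0| + |Φ' mu 0 - Φ' lam 0|
        + ∫ t in Ioc (0:ℝ) Real.pi, |(lam - mu) * Φ mu t| := by positivity
    exact mul_le_mul hAbound hE (Real.exp_nonneg _) (by positivity)
  -- positivity of ∫ Φ lam ^ 2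
  have hpos : ∀ lam ∈ I, 0 < ∫ t in Ioc (0:ℝ) Real.pi, Φ lam t * Φ lam t := by
    intro lam hlam
    have hcont := (hsol lam hlam).1
    have hsqI : IntegrableOn (fun t => Φ lam t * Φ lam t) (Ioc 0 Real.pi) :=
      ((hcont.mul hcont).integrableOn_Icc).mono_set Ioc_subset_Icc_self
    have hc0 : ContinuousWithinAt (Φ lam) (Icc 0 Real.pi) 0 :=
      hcont 0 ⟨le_rfl, hπ⟩
    rw [ContinuousWithinAt, hΦ0 lam hlam] at hc0
    have hev : ∀ᶠ t in nhdsWithin 0 (Icc 0 Real.pi), Φ lam t > 1/2 :=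
      hc0 (eventually_gt_nhds (by norm_num : (1:ℝ)/2 < 1))
    obtain ⟨ε, hε0, hε⟩ := Metric.mem_nhdsWithin_iff.mp hev
    set δ : ℝ := min (ε/2) Real.pi with hδdef
    have hδ0 : 0 < δ := lt_min (by linarith) Real.pi_pos
    have hδπ : δ ≤ Real.pi := min_le_right _ _
    have hge : ∀ t ∈ Ioc (0:ℝ) δ, (1:ℝ)/4 ≤ Φ lam t * Φ lam t := by
      intro t ht
      have htI : t ∈ Icc (0:ℝ) Real.pi := ⟨ht.1.le, ht.2.trans hδπ⟩
      have hdist : dist t 0 < ε := by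
        rw [Real.dist_eq, sub_zero, abs_of_nonneg ht.1.le]
        calc t ≤ δ := ht.2
          _ ≤ ε/2 := min_le_left _ _
          _ < ε := by linarith
      have ht12 : Φ lam t > 1/2 := hε ⟨Metric.mem_ball.mpr hdist, htI⟩
      nlinarith
    have step1 : (1:ℝ)/4 * δ ≤ ∫ t in Ioc (0:ℝ) δ, Φ lam t * Φ lam t := by
      have hconst : (∫ _ in Ioc (0:ℝ) δ, (1:ℝ)/4) ≤ ∫ t in Ioc (0:ℝ) δ, Φ lam t * Φ lam t := by
        refine setIntegral_mono_on (integrableOn_const measure_Ioc_lt_top.ne)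
          (hsqI.mono_set (Ioc_subset_Ioc le_rfl hδπ)) measurableSet_Ioc hge
      rw [setIntegral_const, measureReal_def, Real.volume_Ioc, sub_zero, ENNReal.toReal_ofReal hδ0.le,
        smul_eq_mul, mul_comm] at hconst
      linarith
    have step2 : (∫ t in Ioc (0:ℝ) δ, Φ lam t * Φ lam t)
        ≤ ∫ t in Ioc (0:ℝ) Real.pi, Φ lam t * Φ lam t := by
      refine setIntegral_mono_set hsqI ?_
        (HasSubset.Subset.eventuallyLE (Ioc_subset_Ioc le_rfl hδπ))
      filter_upwards [ae_restrict_mem measurableSet_Ioc] with t ht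
      exact mul_self_nonneg _
    have : 0 < (1:ℝ)/4 * δ := by positivity
    linarith
  -- Green identity application
  have hgreen : ∀ la ∈ I, ∀ mu ∈ I,
      Φ la Real.pi * Φ' mu Real.pi - Φ' la Real.pi * Φ mu Real.pi
        = (f.eval la - f.eval mu)
          + (la - mu) * ∫ t in Ioc (0:ℝ) Real.pi, Φ la t * Φ mu t := by
    intro la hla mu hmu
    have := green hπ hqI (hsol la hla) (hsol mu hmu)
    rw [hΦ0 la hla, hΦ0 mu hmu, hΦ'0 la hla, hΦ'0 mu hmu] at this
    rw [this]
    ring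
  -- local strict decrease
  have hlocal : ∀ lam ∈ I, ∃ δ > 0, ∀ mu ∈ I, |mu - lam| < δ →
      (lam < mu → m mu < m lam) ∧ (mu < lam → m lam < m mu) := by
    intro lam hlam
    have huπ : Φ lam Real.pi ≠ 0 := hπne lam hlam
    have hε₀ : 0 < ∫ t in Ioc (0:ℝ) Real.pi, Φ lam t * Φ lam t := hpos lam hlam
    set ε₀ : ℝ := ∫ t in Ioc (0:ℝ) Real.pi, Φ lam t * Φ lam t with hε₀def
    set Err : ℝ → ℝ :=
      fun mu => (|f.eval lam - f.eval mu| + |lam - mu| * (Real.pi * CM)) * Real.exp CG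
      with hErrdef
    have hErrcont : ContinuousWithinAt Err I lam := by
      apply ContinuousWithinAt.mul _ continuousWithinAt_const
      apply ContinuousWithinAt.add
      · exact (continuousWithinAt_const.sub (hevalcont lam hlam)).abs
      · exact ((continuousWithinAt_const.sub continuousWithinAt_id).abs).mul
          continuousWithinAt_const
    have hErr0 : Err lam = 0 := by simp [hErrdef]
    set η : ℝ := min (|Φ lam Real.pi|/2) (ε₀/(Real.pi*CM+1)) with hηdef
    have huπabs : 0 < |Φ lam Real.pi| := abs_pos.mpr huπ
    have hη : 0 < η := lt_min (by linarith) (by positivity)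
    have hev : ∀ᶠ mu in nhdsWithin lam I, Err mu < η := by
      rw [ContinuousWithinAt, hErr0] at hErrcont
      exact hErrcont (isOpen_Iio.mem_nhds hη)
    obtain ⟨δ, hδ0, hδ⟩ := Metric.mem_nhdsWithin_iff.mp hev
    refine ⟨δ, hδ0, ?_⟩
    intro mu hmu hdist
    have hErrmu : Err mu < η := hδ ⟨Metric.mem_ball.mpr (by rw [Real.dist_eq]; exact hdist), hmu⟩
    have hErrnn : 0 ≤ Err mu := by
      have h1 : 0 ≤ |f.eval lam - f.eval mu| + |lam - mu| * (Real.pi * CM) := by positivity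
      exact mul_nonneg h1 (Real.exp_nonneg _)
    have hd := hdiff lam hlam mu hmu
    have hdπ : |Φ mu Real.pi - Φ lam Real.pi| ≤ Err mu := by
      have h1 := hd Real.pi ⟨hπ, le_rfl⟩
      have h2 := abs_nonneg (Φ' mu Real.pi - Φ' lam Real.pi)
      calc |Φ mu Real.pi - Φ lam Real.pi|
          ≤ |Φ mu Real.pi - Φ lam Real.pi| + |Φ' mu Real.pi - Φ' lam Real.pi| := by linarith
        _ ≤ Err mu := h1
    have hsign : 0 < Φ lam Real.pi * Φ mu Real.pi := by
      have h1 : Err mu < |Φ lam Real.pi|/2 := lt_of_lt_of_le hErrmu (min_le_left _ _)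
      have h2 : |Φ mu Real.pi - Φ lam Real.pi| < |Φ lam Real.pi|/2 := lt_of_le_of_lt hdπ h1
      have h3 := abs_lt.mp h2
      rcases lt_or_gt_of_ne huπ with hneg | hposs
      · rw [abs_of_neg hneg] at h2 h3
        nlinarith
      · rw [abs_of_pos hposs] at h2 h3
        nlinarith
    have hΦlamI : IntegrableOn (Φ lam) (Ioc 0 Real.pi) :=
      ((hsol lam hlam).1.integrableOn_Icc).mono_set Ioc_subset_Icc_self
    have hcontlam := (hsol lam hlam).1
    have hcontmu := (hsol mu hmu).1
    have hintmm : IntegrableOn (fun t => Φ lam t * Φ mu t) (Ioc 0 Real.pi) :=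
      ((hcontlam.mul hcontmu).integrableOn_Icc).mono_set Ioc_subset_Icc_self
    have hintll : IntegrableOn (fun t => Φ lam t * Φ lam t) (Ioc 0 Real.pi) :=
      ((hcontlam.mul hcontlam).integrableOn_Icc).mono_set Ioc_subset_Icc_self
    have hintclose : |(∫ t in Ioc (0:ℝ) Real.pi, Φ lam t * Φ mu t) - ε₀|
        ≤ Real.pi * CM * Err mu := by
      have e1 : (∫ t in Ioc (0:ℝ) Real.pi, Φ lam t * Φ mu t) - ε₀
          = ∫ t in Ioc (0:ℝ) Real.pi, Φ lam t * (Φ mu t - Φ lam t) := by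
        rw [hε₀def, ← integral_sub hintmm hintll]
        apply setIntegral_congr_fun measurableSet_Ioc
        intro t _
        ring
      rw [e1, ← Real.norm_eq_abs]
      refine (norm_integral_le_integral_norm _).trans ?_
      simp only [Real.norm_eq_abs]
      have habsint : IntegrableOn (fun t => |Φ lam t * (Φ mu t - Φ lam t)|) (Ioc 0 Real.pi) :=
        (((hcontlam.mul (hcontmu.sub hcontlam)).integrableOn_Icc).mono_set
          Ioc_subset_Icc_self).abs
      have hb : (∫ t in Ioc (0:ℝ) Real.pi, |Φ lam t * (Φ mu t - Φ lam t)|)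
          ≤ ∫ _ in Ioc (0:ℝ) Real.pi, CM * Err mu := by
        refine setIntegral_mono_on habsint
          (integrableOn_const measure_Ioc_lt_top.ne) measurableSet_Ioc ?_
        intro t ht
        rw [abs_mul]
        have hb1 : |Φ lam t| ≤ CM := by
          have := hCM lam hlam t (Ioc_subset_Icc_self ht)
          have := abs_nonneg (Φ' lam t)
          linarith
        have hb2 : |Φ mu t - Φ lam t| ≤ Err mu := by
          have h1 := hd t (Ioc_subset_Icc_self ht)
          have h2 := abs_nonneg (Φ' mu t - Φ' lam t)
          calc |Φ mu t - Φ lam t|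
              ≤ |Φ mu t - Φ lam t| + |Φ' mu t - Φ' lam t| := by linarith
            _ ≤ Err mu := h1
        exact mul_le_mul hb1 hb2 (abs_nonneg _) hCM0.le
      refine hb.trans ?_
      rw [setIntegral_const, measureReal_def, Real.volume_Ioc, sub_zero, ENNReal.toReal_ofReal hπ, smul_eq_mul]
      ring_nf
      exact le_rfl
    have hJpos : 0 < ∫ t in Ioc (0:ℝ) Real.pi, Φ lam t * Φ mu t := by
      have h1 : Err mu < ε₀/(Real.pi*CM+1) := lt_of_lt_of_le hErrmu (min_le_right _ _)
      have hc : (0:ℝ) < Real.pi*CM + 1 := by positivity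
      rw [lt_div_iff₀ hc] at h1
      have h2 : Real.pi * CM * Err mu < ε₀ := by nlinarith
      have h3 := abs_le.mp hintclose
      linarith
    have hW := hgreen lam hlam mu hmu
    have hvπ : Φ mu Real.pi ≠ 0 := hπne mu hmu
    have heq : m mu - m lam
        = (Φ lam Real.pi * Φ' mu Real.pi - Φ' lam Real.pi * Φ mu Real.pi)
          / (Φ lam Real.pi * Φ mu Real.pi) := by
      rw [hmdef]
      field_simp
    constructor
    · intro hlm
      have hf := hfmono lam hlam mu hmu hlm.le
      have hneg : Φ lam Real.pi * Φ' mu Real.pi - Φ' lam Real.pi * Φ mu Real.pi < 0 := by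
        rw [hW]
        have : (lam - mu) * ∫ t in Ioc (0:ℝ) Real.pi, Φ lam t * Φ mu t < 0 :=
          mul_neg_of_neg_of_pos (by linarith) hJpos
        linarith
      have := div_neg_of_neg_of_pos hneg hsign
      rw [← heq] at this
      linarith
    · intro hml
      have hf := hfmono mu hmu lam hlam hml.le
      have hposW : 0 < Φ lam Real.pi * Φ' mu Real.pi - Φ' lam Real.pi * Φ mu Real.pi := by
        rw [hW]
        have : 0 < (lam - mu) * ∫ t in Ioc (0:ℝ) Real.pi, Φ lam t * Φ mu t :=
          mul_pos (by linarith) hJpos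
        linarith
      have := div_pos hposW hsign
      rw [← heq] at this
      linarith
  -- global argument via sSup
  set S : Set ℝ := {x | x ∈ I ∧ ∀ t, t ∈ Ioc lam₁ x → m t < m lam₁} with hSdef
  have hlam₁I : lam₁ ∈ I := ⟨le_rfl, hlt.le⟩
  have hS1 : lam₁ ∈ S := ⟨hlam₁I, fun t ht => absurd ht.1 (not_lt.mpr ht.2)⟩
  have hSne : S.Nonempty := ⟨lam₁, hS1⟩
  have hSbdd : BddAbove S := ⟨lam₂, fun x hx => hx.1.2⟩
  set c := sSup S with hcdef
  have hc1 : lam₁ ≤ c := le_csSup hSbdd hS1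
  have hc2 : c ≤ lam₂ := csSup_le hSne (fun x hx => hx.1.2)
  have hcI : c ∈ I := ⟨hc1, hc2⟩
  have hcS : c ∈ S := by
    refine ⟨hcI, ?_⟩
    intro t ht
    have htI : t ∈ I := ⟨ht.1.le, ht.2.trans hc2⟩
    obtain ⟨δ, hδ0, hδ⟩ := hlocal t htI
    obtain ⟨s, hsS, hs⟩ := exists_lt_of_lt_csSup hSne
      (show t - δ < c by linarith [ht.2])
    rcases le_or_gt t s with hts | hst
    · exact hsS.2 t ⟨ht.1, hts⟩
    · have hsI : s ∈ I := hsS.1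
      have habs : |s - t| < δ := by
        rw [abs_of_neg (by linarith)]
        linarith
      have hmt : m t < m s := (hδ s hsI habs).2 hst
      rcases eq_or_lt_of_le hsI.1 with heq | hlt1
      · rw [← heq] at hmt
        exact hmt
      · exact hmt.trans (hsS.2 s ⟨hlt1, le_rfl⟩)
  have hceq : c = lam₂ := by
    by_contra hne
    have hclt : c < lam₂ := lt_of_le_of_ne hc2 hne
    obtain ⟨δ, hδ0, hδ⟩ := hlocal c hcI
    set μ' := min lam₂ (c + δ/2) with hμdef
    have hμgt : c < μ' := lt_min hclt (by linarith)
    have hμI : μ' ∈ I := ⟨by linarith, min_le_left _ _⟩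
    have hμdist : |μ' - c| < δ := by
      rw [abs_of_pos (by linarith)]
      have h6 : μ' ≤ c + δ/2 := min_le_right _ _
      linarith
    have hμS : μ' ∈ S := by
      refine ⟨hμI, ?_⟩
      intro t ht
      rcases le_or_gt t c with htc | hct
      · exact hcS.2 t ⟨ht.1, htc⟩
      · have htI : t ∈ I := ⟨ht.1.le, ht.2.trans hμI.2⟩
        have htdist : |t - c| < δ := by
          rw [abs_of_pos (by linarith)]
          have h5 : t ≤ μ' := ht.2
          have h6 : μ' ≤ c + δ/2 := min_le_right _ _
          linarith
        have hmtc : m t < m c := (hδ t htI htdist).1 hct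
        rcases eq_or_lt_of_le hc1 with heqc | hltc
        · rw [← heqc] at hmtc
          exact hmtc
        · exact hmtc.trans (hcS.2 c ⟨hltc, le_rfl⟩)
    have := le_csSup hSbdd hμS
    linarith
  have hfin := hcS.2
  rw [hceq] at hfin
  exact hfin lam₂ ⟨hlt, le_rfl⟩
end
end

section
/- Let q ∈ L¹(0,π) be real-valued and let f be a rational Herglotz–Nevanlinna function. Then a real number λ is an eigenvalue of the symmetric problem P̃(q,f) on [0,2π] if and only if λ is an eigenvalue of P(q,f,∞) or an eigenvalue of P(q,f,0). -/
open MeasureTheory Set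

noncomputable section

/-- The symmetric continuation of `q` from `(0, π)` to `(0, 2π)`. -/
def qSym (q : ℝ → ℝ) : ℝ → ℝ :=
  fun x => if x ≤ Real.pi then q x else q (2 * Real.pi - x)

/-- `lam` is an eigenvalue of the symmetric problem `P̃(q, f)` on `[0, 2π]`. -/
def IsEigenSym (q : ℝ → ℝ) (f : RatHN) (lam : ℝ) : Prop :=
  ∃ y y' : ℝ → ℝ, IsCaraSol (qSym q) (2 * Real.pi) lam y y' ∧
    (∃ x ∈ Icc (0:ℝ) (2 * Real.pi), y x ≠ 0) ∧
    (¬ f.IsPole lam →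
      y' 0 = -f.eval lam * y 0 ∧ y' (2 * Real.pi) = f.eval lam * y (2 * Real.pi)) ∧
    (f.IsPole lam → y 0 = 0 ∧ y (2 * Real.pi) = 0)


namespace SymHelper

open intervalIntegral

variable {q : ℝ → ℝ}

lemma qSym_left {t : ℝ} (ht : t ≤ Real.pi) : qSym q t = q t := if_pos ht

lemma qSym_right {t : ℝ} (ht : ¬ t ≤ Real.pi) : qSym q t = q (2 * Real.pi - t) := if_neg ht

lemma qSym_refl {t : ℝ} (ht : t ≤ Real.pi) : qSym q (2 * Real.pi - t) = q t := by
  by_cases h : 2 * Real.pi - t ≤ Real.pi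
  · have hte : t = Real.pi := le_antisymm ht (by linarith)
    rw [qSym_left h, hte]
    congr 1
    ring
  · rw [qSym_right h]
    congr 1
    ring

lemma q_II (hq : IntegrableOn q (Ioo 0 Real.pi)) :
    IntervalIntegrable q volume 0 Real.pi := by
  rw [intervalIntegrable_iff, uIoc_of_le Real.pi_pos.le]
  exact Iff.mpr integrableOn_Ioc_iff_integrableOn_Ioo hq

lemma qSym_II (hq : IntegrableOn q (Ioo 0 Real.pi)) :
    IntervalIntegrable (qSym q) volume 0 (2 * Real.pi) := by
  have hπ := Real.pi_pos
  have hq1 := q_II hq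
  have h1 : IntervalIntegrable (qSym q) volume 0 Real.pi := by
    rw [intervalIntegrable_iff, uIoc_of_le Real.pi_pos.le] at hq1 ⊢
    exact hq1.congr_fun (fun t ht => (qSym_left ht.2).symm) measurableSet_Ioc
  have h2 : IntervalIntegrable (fun t => q (2 * Real.pi - t)) volume Real.pi (2 * Real.pi) := by
    have h := (q_II hq).comp_sub_left (2 * Real.pi)
    have e1 : 2 * Real.pi - 0 = 2 * Real.pi := by ring
    have e2 : 2 * Real.pi - Real.pi = Real.pi := by ring
    rw [e1, e2] at h
    exact h.symm
  have h3 : IntervalIntegrable (qSym q) volume Real.pi (2 * Real.pi) := by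
    rw [intervalIntegrable_iff, uIoc_of_le (by linarith : Real.pi ≤ 2 * Real.pi)] at h2 ⊢
    exact h2.congr_fun (fun t ht => (qSym_right (not_le.mpr ht.1)).symm) measurableSet_Ioc
  exact h1.trans h3

/-- Restriction of a symmetric-problem solution to `[0, π]`, combined with its
reflection with weight `ε`. -/
lemma restrict_sol (hq : IntegrableOn q (Ioo 0 Real.pi)) {lam : ℝ} {y y' : ℝ → ℝ} (ε : ℝ)
    (h : IsCaraSol (qSym q) (2 * Real.pi) lam y y') :
    IsCaraSol q Real.pi lam (fun x => y x + ε * y (2 * Real.pi - x))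
      (fun x => y' x - ε * y' (2 * Real.pi - x)) := by
  obtain ⟨hy, hy', hI1, hI2⟩ := h
  have hπ := Real.pi_pos
  have hT : (0:ℝ) ≤ 2 * Real.pi := by linarith
  have h0T : (0:ℝ) ∈ Icc (0:ℝ) (2 * Real.pi) := ⟨le_rfl, hT⟩
  have hTT : (2 * Real.pi) ∈ Icc (0:ℝ) (2 * Real.pi) := ⟨hT, le_rfl⟩
  have hmem : ∀ x ∈ Icc (0:ℝ) Real.pi, x ∈ Icc (0:ℝ) (2 * Real.pi) :=
    fun x hx => ⟨hx.1, by linarith [hx.2]⟩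
  have hmem' : ∀ x ∈ Icc (0:ℝ) Real.pi, 2 * Real.pi - x ∈ Icc (0:ℝ) (2 * Real.pi) :=
    fun x hx => ⟨by linarith [hx.2], by linarith [hx.1]⟩
  have hrefl : ContinuousOn (fun x => y (2 * Real.pi - x)) (Icc 0 Real.pi) :=
    hy.comp (continuous_const.sub continuous_id).continuousOn (fun x hx => hmem' x hx)
  have hrefl' : ContinuousOn (fun x => y' (2 * Real.pi - x)) (Icc 0 Real.pi) :=
    hy'.comp (continuous_const.sub continuous_id).continuousOn (fun x hx => hmem' x hx)
  have y'II : ∀ a b : ℝ, a ∈ Icc (0:ℝ) (2 * Real.pi) → b ∈ Icc (0:ℝ) (2 * Real.pi) →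
      IntervalIntegrable y' volume a b := fun a b ha hb =>
    (hy'.mono (uIcc_subset_Icc ha hb)).intervalIntegrable
  have gII : ∀ a b : ℝ, a ∈ Icc (0:ℝ) (2 * Real.pi) → b ∈ Icc (0:ℝ) (2 * Real.pi) →
      IntervalIntegrable (fun t => (qSym q t - lam) * y t) volume a b := by
    intro a b ha hb
    have h1 : IntervalIntegrable (qSym q) volume a b :=
      (qSym_II hq).mono_set (by rw [uIcc_of_le hT]; exact uIcc_subset_Icc ha hb)
    exact (h1.sub intervalIntegrable_const).mul_continuousOn (hy.mono (uIcc_subset_Icc ha hb))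
  have e1 : ∀ a ∈ Icc (0:ℝ) (2 * Real.pi), ∫ t in (0:ℝ)..a, y' t = y a - y 0 := by
    intro a ha; rw [hI1 a ha]; ring
  have e2 : ∀ a ∈ Icc (0:ℝ) (2 * Real.pi),
      ∫ t in (0:ℝ)..a, (qSym q t - lam) * y t = y' a - y' 0 := by
    intro a ha; rw [hI2 a ha]; ring
  have esub : ∀ a ∈ Icc (0:ℝ) (2 * Real.pi),
      ∫ t in a..(2 * Real.pi), y' t = y (2 * Real.pi) - y a := by
    intro a ha
    have hs := integral_interval_sub_left (y'II 0 (2 * Real.pi) h0T hTT) (y'II 0 a h0T ha)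
    rw [← hs, e1 _ hTT, e1 _ ha]; ring
  have gsub : ∀ a ∈ Icc (0:ℝ) (2 * Real.pi),
      ∫ t in a..(2 * Real.pi), (qSym q t - lam) * y t = y' (2 * Real.pi) - y' a := by
    intro a ha
    have hs := integral_interval_sub_left (gII 0 (2 * Real.pi) h0T hTT) (gII 0 a h0T ha)
    rw [← hs, e2 _ hTT, e2 _ ha]; ring
  have hIccsub : Icc (0:ℝ) Real.pi ⊆ Icc (0:ℝ) (2 * Real.pi) :=
    Icc_subset_Icc le_rfl (by linarith)
  refine ⟨(hy.mono hIccsub).add (continuousOn_const.mul hrefl),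
    (hy'.mono hIccsub).sub (continuousOn_const.mul hrefl'), ?_, ?_⟩
  · intro x hx
    have hx2 := hmem x hx
    have hx2' := hmem' x hx
    have hIIa : IntervalIntegrable y' volume 0 x := y'II 0 x h0T hx2
    have hIIb : IntervalIntegrable (fun t => ε * y' (2 * Real.pi - t)) volume 0 x := by
      have hb := (y'II (2 * Real.pi) (2 * Real.pi - x) hTT hx2').comp_sub_left (2 * Real.pi)
      have e3 : 2 * Real.pi - 2 * Real.pi = 0 := by ring
      have e4 : 2 * Real.pi - (2 * Real.pi - x) = x := by ring
      rw [e3, e4] at hb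
      exact hb.const_mul ε
    show y x + ε * y (2 * Real.pi - x)
        = (y 0 + ε * y (2 * Real.pi - 0)) + ∫ t in (0:ℝ)..x, (y' t - ε * y' (2 * Real.pi - t))
    have hsplit :
        (∫ t in (0:ℝ)..x, (y' t - ε * y' (2 * Real.pi - t)))
          = (∫ t in (0:ℝ)..x, y' t) - ε * ∫ t in (0:ℝ)..x, y' (2 * Real.pi - t) := by
      rw [integral_sub hIIa hIIb, intervalIntegral.integral_const_mul]
    have hcs := integral_comp_sub_left y' (2 * Real.pi) (a := 0) (b := x)
    have e4 : 2 * Real.pi - 0 = 2 * Real.pi := by ring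
    rw [e4] at hcs
    rw [hsplit, hcs, e1 x hx2, esub _ hx2', e4]
    ring
  · intro x hx
    have hx2 := hmem x hx
    have hx2' := hmem' x hx
    show y' x - ε * y' (2 * Real.pi - x)
        = (y' 0 - ε * y' (2 * Real.pi - 0))
          + ∫ t in (0:ℝ)..x, (q t - lam) * (y t + ε * y (2 * Real.pi - t))
    have hcong : EqOn (fun t => (q t - lam) * (y t + ε * y (2 * Real.pi - t)))
        (fun t => (qSym q t - lam) * y t
          + ε * ((qSym q (2 * Real.pi - t) - lam) * y (2 * Real.pi - t))) (uIcc 0 x) := by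
      intro t ht
      rw [uIcc_of_le hx.1] at ht
      have ht2 : t ≤ Real.pi := le_trans ht.2 hx.2
      simp only
      rw [qSym_left ht2, qSym_refl ht2]
      ring
    rw [integral_congr hcong]
    have hIIa : IntervalIntegrable (fun t => (qSym q t - lam) * y t) volume 0 x :=
      gII 0 x h0T hx2
    have hIIb : IntervalIntegrable
        (fun t => ε * ((qSym q (2 * Real.pi - t) - lam) * y (2 * Real.pi - t))) volume 0 x := by
      have hb := (gII (2 * Real.pi) (2 * Real.pi - x) hTT hx2').comp_sub_left (2 * Real.pi)
      have e3 : 2 * Real.pi - 2 * Real.pi = 0 := by ring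
      have e4 : 2 * Real.pi - (2 * Real.pi - x) = x := by ring
      rw [e3, e4] at hb
      exact hb.const_mul ε
    rw [integral_add hIIa hIIb, intervalIntegral.integral_const_mul]
    have hcs := integral_comp_sub_left (fun t => (qSym q t - lam) * y t) (2 * Real.pi)
      (a := 0) (b := x)
    have e4 : 2 * Real.pi - 0 = 2 * Real.pi := by ring
    rw [e4] at hcs
    rw [hcs, e2 x hx2, gsub _ hx2', e4]
    ring

/-- Extension of a solution on `[0, π]` to a symmetric solution on `[0, 2π]`,
with reflection weight `ε` (`ε = 1`: even, needs `y′(π) = 0`; `ε = -1`: odd,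
needs `y(π) = 0`). -/
lemma extend_sol (hq : IntegrableOn q (Ioo 0 Real.pi)) {lam : ℝ} {y y' : ℝ → ℝ} (ε : ℝ)
    (h : IsCaraSol q Real.pi lam y y')
    (hm1 : y Real.pi = ε * y Real.pi) (hm2 : y' Real.pi = -ε * y' Real.pi) :
    IsCaraSol (qSym q) (2 * Real.pi) lam
      ((Iic Real.pi).piecewise y (fun x => ε * y (2 * Real.pi - x)))
      ((Iic Real.pi).piecewise y' (fun x => -ε * y' (2 * Real.pi - x))) := by
  obtain ⟨hy, hy', hI1, hI2⟩ := h
  have hπ := Real.pi_pos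
  have hT : (0:ℝ) ≤ 2 * Real.pi := by linarith
  have hπT : Real.pi ≤ 2 * Real.pi := by linarith
  have eTπ : 2 * Real.pi - Real.pi = Real.pi := by ring
  have h0π : (0:ℝ) ∈ Icc (0:ℝ) Real.pi := ⟨le_rfl, hπ.le⟩
  have hππ : Real.pi ∈ Icc (0:ℝ) Real.pi := ⟨hπ.le, le_rfl⟩
  set Y : ℝ → ℝ := (Iic Real.pi).piecewise y (fun x => ε * y (2 * Real.pi - x)) with hYdef
  set Y' : ℝ → ℝ := (Iic Real.pi).piecewise y' (fun x => -ε * y' (2 * Real.pi - x)) with hY'def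
  have hYle : ∀ t : ℝ, t ≤ Real.pi → Y t = y t :=
    fun t ht => Set.piecewise_eq_of_mem _ _ _ ht
  have hY'le : ∀ t : ℝ, t ≤ Real.pi → Y' t = y' t :=
    fun t ht => Set.piecewise_eq_of_mem _ _ _ ht
  have hYgt : ∀ t : ℝ, ¬ t ≤ Real.pi → Y t = ε * y (2 * Real.pi - t) :=
    fun t ht => Set.piecewise_eq_of_notMem _ _ _ ht
  have hY'gt : ∀ t : ℝ, ¬ t ≤ Real.pi → Y' t = -ε * y' (2 * Real.pi - t) :=
    fun t ht => Set.piecewise_eq_of_notMem _ _ _ ht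
  have hYge : ∀ t : ℝ, Real.pi ≤ t → Y t = ε * y (2 * Real.pi - t) := by
    intro t ht
    rcases eq_or_lt_of_le ht with h | h
    · rw [← h, eTπ, hYle _ le_rfl, ← hm1]
    · exact hYgt t (not_le.mpr h)
  have hY'ge : ∀ t : ℝ, Real.pi ≤ t → Y' t = -ε * y' (2 * Real.pi - t) := by
    intro t ht
    rcases eq_or_lt_of_le ht with h | h
    · rw [← h, eTπ, hY'le _ le_rfl, ← hm2]
    · exact hY'gt t (not_le.mpr h)
  have hmemR : ∀ t ∈ Icc Real.pi (2 * Real.pi), 2 * Real.pi - t ∈ Icc (0:ℝ) Real.pi :=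
    fun t ht => ⟨by linarith [ht.2], by linarith [ht.1]⟩
  -- continuity of the pieces
  have hcontY : ContinuousOn Y (Icc 0 (2 * Real.pi)) := by
    have h' : ContinuousOn (fun x => ε * y (2 * Real.pi - x)) (Icc Real.pi (2 * Real.pi)) :=
      continuousOn_const.mul
        (hy.comp (continuous_const.sub continuous_id).continuousOn (fun t ht => hmemR t ht))
    have := continuousOn_piecewise_ite' (t := Iic Real.pi)
      (s := Icc (0:ℝ) (2 * Real.pi)) (s' := Icc (0:ℝ) (2 * Real.pi))
      (f := y) (g := fun x => ε * y (2 * Real.pi - x)) ?_ ?_ rfl ?_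
    · rwa [Set.ite_same] at this
    · rw [closure_Iic]
      exact hy.mono (fun t ht => ⟨ht.1.1, ht.2⟩)
    · rw [compl_Iic, closure_Ioi]
      exact h'.mono (fun t ht => ⟨ht.2, ht.1.2⟩)
    · intro t ht
      rw [frontier_Iic] at ht
      have : t = Real.pi := ht.2
      subst this
      simp only
      rw [eTπ, ← hm1]
  have hcontY' : ContinuousOn Y' (Icc 0 (2 * Real.pi)) := by
    have h' : ContinuousOn (fun x => -ε * y' (2 * Real.pi - x)) (Icc Real.pi (2 * Real.pi)) :=
      continuousOn_const.mul
        (hy'.comp (continuous_const.sub continuous_id).continuousOn (fun t ht => hmemR t ht))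
    have := continuousOn_piecewise_ite' (t := Iic Real.pi)
      (s := Icc (0:ℝ) (2 * Real.pi)) (s' := Icc (0:ℝ) (2 * Real.pi))
      (f := y') (g := fun x => -ε * y' (2 * Real.pi - x)) ?_ ?_ rfl ?_
    · rwa [Set.ite_same] at this
    · rw [closure_Iic]
      exact hy'.mono (fun t ht => ⟨ht.1.1, ht.2⟩)
    · rw [compl_Iic, closure_Ioi]
      exact h'.mono (fun t ht => ⟨ht.2, ht.1.2⟩)
    · intro t ht
      rw [frontier_Iic] at ht
      have : t = Real.pi := ht.2
      subst this
      simp only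
      rw [eTπ, ← hm2]
  -- integrability helpers on [0, π]
  have y'II : ∀ a b : ℝ, a ∈ Icc (0:ℝ) Real.pi → b ∈ Icc (0:ℝ) Real.pi →
      IntervalIntegrable y' volume a b := fun a b ha hb =>
    (hy'.mono (uIcc_subset_Icc ha hb)).intervalIntegrable
  have gII : ∀ a b : ℝ, a ∈ Icc (0:ℝ) Real.pi → b ∈ Icc (0:ℝ) Real.pi →
      IntervalIntegrable (fun t => (q t - lam) * y t) volume a b := by
    intro a b ha hb
    have h1 : IntervalIntegrable q volume a b :=
      (q_II hq).mono_set (by rw [uIcc_of_le hπ.le]; exact uIcc_subset_Icc ha hb)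
    exact (h1.sub intervalIntegrable_const).mul_continuousOn (hy.mono (uIcc_subset_Icc ha hb))
  have e1 : ∀ a ∈ Icc (0:ℝ) Real.pi, ∫ t in (0:ℝ)..a, y' t = y a - y 0 := by
    intro a ha; rw [hI1 a ha]; ring
  have e2 : ∀ a ∈ Icc (0:ℝ) Real.pi,
      ∫ t in (0:ℝ)..a, (q t - lam) * y t = y' a - y' 0 := by
    intro a ha; rw [hI2 a ha]; ring
  have esub : ∀ a ∈ Icc (0:ℝ) Real.pi,
      ∫ t in a..Real.pi, y' t = y Real.pi - y a := by
    intro a ha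
    have hs := integral_interval_sub_left (y'II 0 Real.pi h0π hππ) (y'II 0 a h0π ha)
    rw [← hs, e1 _ hππ, e1 _ ha]; ring
  have gsub : ∀ a ∈ Icc (0:ℝ) Real.pi,
      ∫ t in a..Real.pi, (q t - lam) * y t = y' Real.pi - y' a := by
    intro a ha
    have hs := integral_interval_sub_left (gII 0 Real.pi h0π hππ) (gII 0 a h0π ha)
    rw [← hs, e2 _ hππ, e2 _ ha]; ring
  -- interval integrability of Y' and of (qSym − lam)·Y on subintervals of [0, 2π]
  have Y'II : ∀ a b : ℝ, a ∈ Icc (0:ℝ) (2 * Real.pi) → b ∈ Icc (0:ℝ) (2 * Real.pi) →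
      IntervalIntegrable Y' volume a b := fun a b ha hb =>
    (hcontY'.mono (uIcc_subset_Icc ha hb)).intervalIntegrable
  have GII : ∀ a b : ℝ, a ∈ Icc (0:ℝ) (2 * Real.pi) → b ∈ Icc (0:ℝ) (2 * Real.pi) →
      IntervalIntegrable (fun t => (qSym q t - lam) * Y t) volume a b := by
    intro a b ha hb
    have h1 : IntervalIntegrable (qSym q) volume a b :=
      (qSym_II hq).mono_set (by rw [uIcc_of_le hT]; exact uIcc_subset_Icc ha hb)
    exact (h1.sub intervalIntegrable_const).mul_continuousOn
      (hcontY.mono (uIcc_subset_Icc ha hb))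
  refine ⟨hcontY, hcontY', ?_, ?_⟩
  · -- first integral equation on [0, 2π]
    intro x hx
    have hY0 : Y 0 = y 0 := hYle 0 hπ.le
    by_cases hxπ : x ≤ Real.pi
    · have hxm : x ∈ Icc (0:ℝ) Real.pi := ⟨hx.1, hxπ⟩
      have : (∫ t in (0:ℝ)..x, Y' t) = ∫ t in (0:ℝ)..x, y' t := by
        apply integral_congr
        intro t ht
        rw [uIcc_of_le hx.1] at ht
        exact hY'le t (le_trans ht.2 hxπ)
      rw [hYle x hxπ, hY0, this]
      exact hI1 x hxm
    · have hxgt : Real.pi < x := not_le.mp hxπ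
      have hxm' : 2 * Real.pi - x ∈ Icc (0:ℝ) Real.pi := ⟨by linarith [hx.2], by linarith⟩
      have hπ2 : Real.pi ∈ Icc (0:ℝ) (2 * Real.pi) := ⟨hπ.le, hπT⟩
      have h02 : (0:ℝ) ∈ Icc (0:ℝ) (2 * Real.pi) := ⟨le_rfl, hT⟩
      have hsplit := integral_add_adjacent_intervals
        (Y'II 0 Real.pi h02 hπ2) (Y'II Real.pi x hπ2 hx)
      have hleft : (∫ t in (0:ℝ)..Real.pi, Y' t) = y Real.pi - y 0 := by
        rw [← e1 _ hππ]
        apply integral_congr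
        intro t ht
        rw [uIcc_of_le hπ.le] at ht
        exact hY'le t ht.2
      have hright : (∫ t in Real.pi..x, Y' t) = -ε * (y Real.pi - y (2 * Real.pi - x)) := by
        have hc : (∫ t in Real.pi..x, Y' t)
            = ∫ t in Real.pi..x, -ε * y' (2 * Real.pi - t) := by
          apply integral_congr
          intro t ht
          rw [uIcc_of_le hxgt.le] at ht
          exact hY'ge t ht.1
        have hcs := integral_comp_sub_left y' (2 * Real.pi) (a := Real.pi) (b := x)
        rw [eTπ] at hcs
        rw [hc, intervalIntegral.integral_const_mul, hcs, esub _ hxm']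
      rw [hYge x hxgt.le, hY0, ← hsplit, hleft, hright]
      have hm1' : y Real.pi - ε * y Real.pi = 0 := by rw [← hm1]; ring
      linear_combination (-1 : ℝ) * hm1'
  · -- second integral equation on [0, 2π]
    intro x hx
    have hY'0 : Y' 0 = y' 0 := hY'le 0 hπ.le
    by_cases hxπ : x ≤ Real.pi
    · have hxm : x ∈ Icc (0:ℝ) Real.pi := ⟨hx.1, hxπ⟩
      have : (∫ t in (0:ℝ)..x, (qSym q t - lam) * Y t)
          = ∫ t in (0:ℝ)..x, (q t - lam) * y t := by
        apply integral_congr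
        intro t ht
        rw [uIcc_of_le hx.1] at ht
        have ht2 : t ≤ Real.pi := le_trans ht.2 hxπ
        simp only
        rw [qSym_left ht2, hYle t ht2]
      rw [hY'le x hxπ, hY'0, this]
      exact hI2 x hxm
    · have hxgt : Real.pi < x := not_le.mp hxπ
      have hxm' : 2 * Real.pi - x ∈ Icc (0:ℝ) Real.pi := ⟨by linarith [hx.2], by linarith⟩
      have hπ2 : Real.pi ∈ Icc (0:ℝ) (2 * Real.pi) := ⟨hπ.le, hπT⟩
      have h02 : (0:ℝ) ∈ Icc (0:ℝ) (2 * Real.pi) := ⟨le_rfl, hT⟩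
      have hsplit := integral_add_adjacent_intervals
        (GII 0 Real.pi h02 hπ2) (GII Real.pi x hπ2 hx)
      have hleft : (∫ t in (0:ℝ)..Real.pi, (qSym q t - lam) * Y t)
          = y' Real.pi - y' 0 := by
        rw [← e2 _ hππ]
        apply integral_congr
        intro t ht
        rw [uIcc_of_le hπ.le] at ht
        simp only
        rw [qSym_left ht.2, hYle t ht.2]
      have hright : (∫ t in Real.pi..x, (qSym q t - lam) * Y t)
          = ε * (y' Real.pi - y' (2 * Real.pi - x)) := by
        have hc : (∫ t in Real.pi..x, (qSym q t - lam) * Y t)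
            = ∫ t in Real.pi..x, ε * ((q (2 * Real.pi - t) - lam) * y (2 * Real.pi - t)) := by
          apply integral_congr
          intro t ht
          rw [uIcc_of_le hxgt.le] at ht
          have h1 : qSym q t = q (2 * Real.pi - t) := by
            rcases eq_or_lt_of_le ht.1 with h | h
            · rw [← h, eTπ, qSym_left le_rfl]
            · exact qSym_right (not_le.mpr h)
          simp only
          rw [h1, hYge t ht.1]
          ring
        have hcs := integral_comp_sub_left (fun t => (q t - lam) * y t) (2 * Real.pi)
          (a := Real.pi) (b := x)
        rw [eTπ] at hcs
        rw [hc, intervalIntegral.integral_const_mul, hcs, gsub _ hxm']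
      rw [hY'ge x hxgt.le, hY'0, ← hsplit, hleft, hright]
      have hm2' : y' Real.pi + ε * y' Real.pi = 0 := by linear_combination hm2
      linear_combination (-1 : ℝ) * hm2'

end SymHelper

theorem symmetric_eigenvalue_iff
    (q : ℝ → ℝ) (hq : IntegrableOn q (Ioo 0 Real.pi))
    (f : RatHN) (lam : ℝ) :
    IsEigenSym q f lam ↔ IsEigen q f none lam ∨ IsEigen q f (some 0) lam := by
  have hπ := Real.pi_pos
  have eT0 : 2 * Real.pi - 0 = 2 * Real.pi := by ring
  have eTπ : 2 * Real.pi - Real.pi = Real.pi := by ring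
  constructor
  · rintro ⟨y, y', hsol, ⟨x₀, hx₀, hx₀ne⟩, hbc, hpole⟩
    by_cases hu : ∃ x ∈ Icc (0:ℝ) Real.pi, y x + 1 * y (2 * Real.pi - x) ≠ 0
    · -- even combination is nontrivial: Neumann-type problem (b = 0)
      right
      refine ⟨fun x => y x + 1 * y (2 * Real.pi - x),
        fun x => y' x - 1 * y' (2 * Real.pi - x),
        SymHelper.restrict_sol hq 1 hsol, hu, ?_, ?_, ?_, ?_⟩
      · intro hnp
        obtain ⟨h1, h2⟩ := hbc hnp
        simp only [eT0]
        rw [h1, h2]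
        ring
      · intro hp
        obtain ⟨h1, h2⟩ := hpole hp
        simp only [eT0]
        rw [h1, h2]
        ring
      · intro bb hbb
        have : bb = (0:ℝ) := (Option.some.injEq _ _ ▸ hbb).symm
        subst this
        simp only [eTπ]
        ring
      · intro hc
        exact absurd hc (by simp)
    · -- odd combination is nontrivial: Dirichlet problem (b = ∞)
      left
      push_neg at hu
      have hv : ∃ x ∈ Icc (0:ℝ) Real.pi, y x + (-1) * y (2 * Real.pi - x) ≠ 0 := by
        by_contra hv
        push_neg at hv
        apply hx₀ne
        by_cases hle : x₀ ≤ Real.pi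
        · have h1 := hu x₀ ⟨hx₀.1, hle⟩
          have h2 := hv x₀ ⟨hx₀.1, hle⟩
          linarith
        · have ht : 2 * Real.pi - x₀ ∈ Icc (0:ℝ) Real.pi :=
            ⟨by linarith [hx₀.2], by linarith [not_le.mp hle]⟩
          have h1 := hu _ ht
          have h2 := hv _ ht
          have he : 2 * Real.pi - (2 * Real.pi - x₀) = x₀ := by ring
          rw [he] at h1 h2
          linarith
      refine ⟨fun x => y x + (-1) * y (2 * Real.pi - x),
        fun x => y' x - (-1) * y' (2 * Real.pi - x),
        SymHelper.restrict_sol hq (-1) hsol, hv, ?_, ?_, ?_, ?_⟩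
      · intro hnp
        obtain ⟨h1, h2⟩ := hbc hnp
        simp only [eT0]
        rw [h1, h2]
        ring
      · intro hp
        obtain ⟨h1, h2⟩ := hpole hp
        simp only [eT0]
        rw [h1, h2]
        ring
      · intro bb hbb
        exact absurd hbb (by simp)
      · intro _
        simp only [eTπ]
        ring
  · rintro (⟨y, y', hsol, ⟨x₁, hx₁, hx₁ne⟩, hbc, hpole, _, hdir⟩ |
        ⟨y, y', hsol, ⟨x₁, hx₁, hx₁ne⟩, hbc, hpole, hneu, _⟩)
    · -- Dirichlet case: odd extension (ε = -1)
      have hyπ : y Real.pi = 0 := hdir rfl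
      have hm1 : y Real.pi = (-1 : ℝ) * y Real.pi := by rw [hyπ]; ring
      have hm2 : y' Real.pi = -(-1 : ℝ) * y' Real.pi := by ring
      have hext := SymHelper.extend_sol hq (-1) hsol hm1 hm2
      have hTgt : ¬ (2 * Real.pi ≤ Real.pi) := by linarith
      have hY0 : (Iic Real.pi).piecewise y (fun x => (-1:ℝ) * y (2 * Real.pi - x)) 0 = y 0 :=
        Set.piecewise_eq_of_mem _ _ _ (by simp [hπ.le] : (0:ℝ) ∈ Iic Real.pi)
      have hYT : (Iic Real.pi).piecewise y (fun x => (-1:ℝ) * y (2 * Real.pi - x)) (2 * Real.pi)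
          = -y 0 := by
        rw [Set.piecewise_eq_of_notMem _ _ _ (by simpa using hTgt)]
        have : 2 * Real.pi - 2 * Real.pi = 0 := by ring
        rw [this]; ring
      have hY'0 : (Iic Real.pi).piecewise y' (fun x => -(-1:ℝ) * y' (2 * Real.pi - x)) 0
          = y' 0 :=
        Set.piecewise_eq_of_mem _ _ _ (by simp [hπ.le] : (0:ℝ) ∈ Iic Real.pi)
      have hY'T : (Iic Real.pi).piecewise y' (fun x => -(-1:ℝ) * y' (2 * Real.pi - x))
          (2 * Real.pi) = y' 0 := by
        rw [Set.piecewise_eq_of_notMem _ _ _ (by simpa using hTgt)]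
        have : 2 * Real.pi - 2 * Real.pi = 0 := by ring
        rw [this]; ring
      refine ⟨_, _, hext, ⟨x₁, ⟨hx₁.1, by linarith [hx₁.2]⟩, ?_⟩, ?_, ?_⟩
      · rw [Set.piecewise_eq_of_mem _ _ _ (Set.mem_Iic.mpr hx₁.2)]
        exact hx₁ne
      · intro hnp
        have h1 := hbc hnp
        constructor
        · rw [hY'0, hY0]; exact h1
        · rw [hY'T, hYT, h1]; ring
      · intro hp
        have h1 := hpole hp
        constructor
        · rw [hY0]; exact h1
        · rw [hYT, h1]; ring
    · -- Neumann case: even extension (ε = 1)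
      have hy'π : y' Real.pi = 0 := by simpa using hneu 0 rfl
      have hm1 : y Real.pi = (1 : ℝ) * y Real.pi := by ring
      have hm2 : y' Real.pi = -(1 : ℝ) * y' Real.pi := by rw [hy'π]; ring
      have hext := SymHelper.extend_sol hq 1 hsol hm1 hm2
      have hTgt : ¬ (2 * Real.pi ≤ Real.pi) := by linarith
      have hY0 : (Iic Real.pi).piecewise y (fun x => (1:ℝ) * y (2 * Real.pi - x)) 0 = y 0 :=
        Set.piecewise_eq_of_mem _ _ _ (by simp [hπ.le] : (0:ℝ) ∈ Iic Real.pi)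
      have hYT : (Iic Real.pi).piecewise y (fun x => (1:ℝ) * y (2 * Real.pi - x)) (2 * Real.pi)
          = y 0 := by
        rw [Set.piecewise_eq_of_notMem _ _ _ (by simpa using hTgt)]
        have : 2 * Real.pi - 2 * Real.pi = 0 := by ring
        rw [this]; ring
      have hY'0 : (Iic Real.pi).piecewise y' (fun x => -(1:ℝ) * y' (2 * Real.pi - x)) 0
          = y' 0 :=
        Set.piecewise_eq_of_mem _ _ _ (by simp [hπ.le] : (0:ℝ) ∈ Iic Real.pi)
      have hY'T : (Iic Real.pi).piecewise y' (fun x => -(1:ℝ) * y' (2 * Real.pi - x))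
          (2 * Real.pi) = -y' 0 := by
        rw [Set.piecewise_eq_of_notMem _ _ _ (by simpa using hTgt)]
        have : 2 * Real.pi - 2 * Real.pi = 0 := by ring
        rw [this]; ring
      refine ⟨_, _, hext, ⟨x₁, ⟨hx₁.1, by linarith [hx₁.2]⟩, ?_⟩, ?_, ?_⟩
      · rw [Set.piecewise_eq_of_mem _ _ _ (Set.mem_Iic.mpr hx₁.2)]
        exact hx₁ne
      · intro hnp
        have h1 := hbc hnp
        constructor
        · rw [hY'0, hY0]; exact h1
        · rw [hY'T, hYT, h1]; ring
      · intro hp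
        have h1 := hpole hp
        constructor
        · rw [hY0]; exact h1
        · rw [hYT, h1]
end
end
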